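/- arXiv:math/0612168 — 7 statements merged into one kernel-verified Lean document; each statement's English description precedes it below -/
import Mathlib

section
/- Fix M > 0 and let V(r) = (2M/r³)(1 − 2M/r). Then for all r > 2M the radial trapping term satisfies the identity 2V(r) + r_*(r)·(1 − 2M/r)·(dV/dr)(r) = (2M/r⁵)(1 − 2M/r)(2r² − r_*(r)(3r − 8M)), and there exists R > 0 such that this quantity is nonpositive for every r ∈ (2M, ∞) with |r_*(r)| ≥ R; in other words, the trapping term 2V + r_* (dV/dr_*) is positive only in a compact region of the tortoise coordinate. -/
/-!
Since `dV/dr = -(2M/r⁵)(3r − 8M)`, the trapping term factors as a nonnegative prefactor times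
`2r² − r_*(3r − 8M)`. With `y = (r − 2M)/M` one has `r_* = r − 3M + 2M log y`, and the two
elementary bounds `1 − 1/y ≤ log y ≤ y − 1` show that `r_* ≤ −42M` forces `r ≤ 2M + 2M/43`
(so `3r − 8M < 0` while `−r_*` is large) and that `r_* ≥ 42M` forces `r ≥ 17M`
(so `r_* ≥ r − 3M` and `(r − 3M)(3r − 8M) ≥ 2r²`).
-/

namespace Schwarzschild

open Real

noncomputable def tortoise (M r : ℝ) : ℝ :=
  r + 2 * M * log ((r - 2 * M) / (2 * M)) - 3 * M + 2 * M * log 2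

noncomputable def potential (M r : ℝ) : ℝ := (2 * M / r ^ 3) * (1 - 2 * M / r)

variable {M r : ℝ}

theorem tortoise_eq (hM : 0 < M) (hr : 2 * M < r) :
    tortoise M r = r - 3 * M + 2 * M * log ((r - 2 * M) / M) := by
  have hx : (r - 2 * M) / (2 * M) ≠ 0 := (div_pos (by linarith) (by positivity)).ne'
  have hlog : log ((r - 2 * M) / (2 * M)) + log 2 = log ((r - 2 * M) / M) := by
    rw [← log_mul hx two_ne_zero]
    congr 1
    field_simp
  rw [tortoise, ← hlog]
  ring

theorem tortoise_le (hM : 0 < M) (hr : 2 * M < r) : tortoise M r ≤ 3 * r - 9 * M := by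
  have hlog := log_le_sub_one_of_pos (div_pos (sub_pos.2 hr) hM)
  have hscale : 2 * M * ((r - 2 * M) / M - 1) = 2 * r - 6 * M := by
    field_simp
    ring
  rw [tortoise_eq hM hr]
  nlinarith

theorem sub_le_tortoise (hM : 0 < M) (hr : 3 * M ≤ r) : r - 3 * M ≤ tortoise M r := by
  have hlog : 0 ≤ log ((r - 2 * M) / M) := log_nonneg (by rw [le_div_iff₀ hM]; linarith)
  rw [tortoise_eq hM (by linarith)]
  nlinarith

theorem sub_sub_div_le_tortoise (hM : 0 < M) (hr : 2 * M < r) :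
    r - M - 2 * M ^ 2 / (r - 2 * M) ≤ tortoise M r := by
  have hlog := one_sub_inv_le_log_of_pos (div_pos (sub_pos.2 hr) hM)
  have hscale : 2 * M * (1 - ((r - 2 * M) / M)⁻¹) = 2 * M - 2 * M ^ 2 / (r - 2 * M) := by
    field_simp [(sub_pos.2 hr).ne']
  rw [tortoise_eq hM hr]
  nlinarith

theorem hasDerivAt_potential (hr : r ≠ 0) :
    HasDerivAt (potential M) (-(2 * M / r ^ 5) * (3 * r - 8 * M)) r := by
  have h := (((hasDerivAt_pow 3 r).fun_inv (pow_ne_zero 3 hr)).const_mul (2 * M)).fun_mul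
    (((hasDerivAt_inv hr).const_mul (2 * M)).const_sub 1)
  have hfun : potential M = fun x => 2 * M * (x ^ 3)⁻¹ * (1 - 2 * M * x⁻¹) := by
    funext x
    simp only [potential, div_eq_mul_inv]
  rw [hfun]
  refine h.congr_deriv ?_
  field_simp
  ring

theorem trapping_term_eq (hr : r ≠ 0) (s : ℝ) :
    2 * potential M r + s * ((1 - 2 * M / r) * deriv (potential M) r)
      = (2 * M / r ^ 5) * (1 - 2 * M / r) * (2 * r ^ 2 - s * (3 * r - 8 * M)) := by
  rw [(hasDerivAt_potential hr).deriv, potential]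
  field_simp
  ring

theorem trapping_factor_nonpos_of_tortoise_le (hM : 0 < M) (hr : 2 * M < r)
    (hs : tortoise M r ≤ -(42 * M)) : 2 * r ^ 2 - tortoise M r * (3 * r - 8 * M) ≤ 0 := by
  have hnear : r - 2 * M ≤ 2 * M / 43 := by
    have hpos : 0 < r - 2 * M := sub_pos.2 hr
    have h : 43 * M ≤ 2 * M ^ 2 / (r - 2 * M) := by linarith [sub_sub_div_le_tortoise hM hr]
    rw [le_div_iff₀ hpos] at h
    rw [le_div_iff₀ (by norm_num)]
    nlinarith
  nlinarith

theorem trapping_factor_nonpos_of_le_tortoise (hM : 0 < M) (hr : 2 * M < r)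
    (hs : 42 * M ≤ tortoise M r) : 2 * r ^ 2 - tortoise M r * (3 * r - 8 * M) ≤ 0 := by
  have hfar : 17 * M ≤ r := by linarith [tortoise_le hM hr]
  have hlower : r - 3 * M ≤ tortoise M r := sub_le_tortoise hM (by linarith)
  nlinarith

end Schwarzschild

open Schwarzschild in
/-- Fix `M > 0` and let `V(r) = (2M/r³)(1 − 2M/r)`.  Then for all
`r > 2M` the radial trapping term satisfies the identity
`2V(r) + r_*(r)·(1 − 2M/r)·(dV/dr)(r) = (2M/r⁵)(1 − 2M/r)(2r² − r_*(r)(3r − 8M))`,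
and there exists `R > 0` such that this quantity is nonpositive for every
`r ∈ (2M, ∞)` with `|r_*(r)| ≥ R`; in other words, the trapping term
`2V + r_* (dV/dr_*)` is positive only in a compact region of the tortoise
coordinate. -/
theorem radial_trapping_term_compact_support (M : ℝ) (hM : 0 < M)
    (rstar : ℝ → ℝ)
    (hrstar : ∀ r : ℝ, rstar r =
      r + 2 * M * Real.log ((r - 2 * M) / (2 * M)) - 3 * M + 2 * M * Real.log 2)
    (V : ℝ → ℝ) (hV : ∀ r : ℝ, V r = (2 * M / r ^ 3) * (1 - 2 * M / r)) :
    (∀ r : ℝ, 2 * M < r →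
      2 * V r + rstar r * ((1 - 2 * M / r) * deriv V r)
        = (2 * M / r ^ 5) * (1 - 2 * M / r) * (2 * r ^ 2 - rstar r * (3 * r - 8 * M))) ∧
    (∃ R : ℝ, 0 < R ∧ ∀ r : ℝ, 2 * M < r → R ≤ |rstar r| →
      2 * V r + rstar r * ((1 - 2 * M / r) * deriv V r) ≤ 0) := by
  obtain rfl : rstar = tortoise M := funext hrstar
  obtain rfl : V = potential M := funext hV
  have hr0 : ∀ r, 2 * M < r → r ≠ 0 := fun r hr => (lt_trans (by positivity) hr).ne'
  refine ⟨fun r hr => trapping_term_eq (hr0 r hr) _, 42 * M, by positivity, fun r hr hR => ?_⟩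
  rw [trapping_term_eq (hr0 r hr)]
  have hprefactor : 0 ≤ 2 * M / r ^ 5 * (1 - 2 * M / r) := by
    have hr' : 0 < r := lt_trans (by positivity) hr
    have : 2 * M / r < 1 := (div_lt_one hr').2 hr
    have : 0 ≤ 2 * M / r ^ 5 := by positivity
    nlinarith
  refine mul_nonpos_of_nonneg_of_nonpos hprefactor ?_
  rcases le_abs'.1 hR with hneg | hpos
  · exact trapping_factor_nonpos_of_tortoise_le hM hr hneg
  · exact trapping_factor_nonpos_of_le_tortoise hM hr hpos
end

section
/- Fix M > 0 and let V_L(r) = (1/r²)(1 − 2M/r). Then there exists a constant C > 0 such that for all r ∈ (2M, ∞), V_L(r)·(1 + r_*(r)²) ≤ C; that is, the angular potential decays at least like (1 + r_*²)⁻¹ in the tortoise coordinate, uniformly up to the event horizon and to spatial infinity. -/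
/-- Fix `M > 0` and let `V_L(r) = (1/r²)(1 − 2M/r)`.  Then there
exists a constant `C > 0` such that for all `r ∈ (2M, ∞)`,
`V_L(r)·(1 + r_*(r)²) ≤ C`; that is, the angular potential decays at least like
`(1 + r_*²)⁻¹` in the tortoise coordinate, uniformly up to the event horizon and to
spatial infinity. -/
theorem angular_potential_quadratic_decay (M : ℝ) (hM : 0 < M)
    (rstar : ℝ → ℝ)
    (hrstar : ∀ r : ℝ, rstar r =
      r + 2 * M * Real.log ((r - 2 * M) / (2 * M)) - 3 * M + 2 * M * Real.log 2)
    (VL : ℝ → ℝ) (hVL : ∀ r : ℝ, VL r = (1 / r ^ 2) * (1 - 2 * M / r)) :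
    ∃ C : ℝ, 0 < C ∧ ∀ r ∈ Set.Ioi (2 * M), VL r * (1 + (rstar r) ^ 2) ≤ C := by
  refine ⟨(1 + 2 * M ^ 2) / (8 * M ^ 2) + 1 / (9 * M ^ 2) + 13, by positivity, ?_⟩
  intro r hr
  rw [Set.mem_Ioi] at hr
  have hr0 : 0 < r := by nlinarith
  set t : ℝ := (r - 2 * M) / M with ht
  have ht0 : 0 < t := div_pos (by linarith) hM
  have hMt : M * t = r - 2 * M := by
    rw [ht, mul_div_assoc', mul_comm, mul_div_assoc, div_self hM.ne', mul_one]
  have hlogarg : (r - 2 * M) / (2 * M) = t / 2 := by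
    rw [ht, div_div, mul_comm]
  have hrstar_eq : rstar r = M * (t - 1) + 2 * M * Real.log t := by
    rw [hrstar, hlogarg, Real.log_div (ne_of_gt ht0) two_ne_zero]
    linear_combination -hMt
  have hVLr : VL r = (r - 2 * M) / r ^ 3 := by
    rw [hVL, eq_div_iff (by positivity : (r:ℝ) ^ 3 ≠ 0)]
    field_simp
  have hVL0 : 0 ≤ VL r := by
    rw [hVLr]; exact div_nonneg (by linarith) (by positivity)
  by_cases hcase : t ≤ 1
  · -- near horizon: 2M < r ≤ 3M
    have hkey : t * (Real.log t) ^ 2 ≤ 4 := by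
      set s : ℝ := Real.sqrt t with hs
      have hs0 : 0 < s := Real.sqrt_pos.mpr ht0
      have hs2 : s ^ 2 = t := Real.sq_sqrt ht0.le
      have hs1 : s ≤ 1 := Real.sqrt_le_one.mpr hcase
      have hlog : Real.log t = 2 * Real.log s := by
        rw [← hs2, Real.log_pow]; push_cast; ring
      have hls : -Real.log s ≤ 1 / s := by
        have := Real.log_le_sub_one_of_pos (inv_pos.mpr hs0)
        rw [Real.log_inv] at this
        have hsi : (0:ℝ) ≤ s⁻¹ := by positivity
        rw [one_div]; linarith
      have hlneg : Real.log s ≤ 0 := Real.log_nonpos hs0.le hs1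
      have h1 : (Real.log s) ^ 2 ≤ (1 / s) ^ 2 :=
        sq_le_sq' (by linarith) (le_trans hlneg (by positivity))
      have hss : s ^ 2 * (1 / s) ^ 2 = 1 := by field_simp
      calc t * (Real.log t) ^ 2 = 4 * (s ^ 2 * (Real.log s) ^ 2) := by
            rw [hlog, ← hs2]; ring
        _ ≤ 4 * (s ^ 2 * (1 / s) ^ 2) := by nlinarith [sq_nonneg s]
        _ = 4 := by rw [hss]; ring
    have hVLb : VL r ≤ t / (8 * M ^ 2) := by
      rw [hVLr]
      rw [← hMt]
      rw [div_le_div_iff₀ (by positivity) (by positivity)]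
      have h8 : 8 * M ^ 3 ≤ r ^ 3 := by
        nlinarith [mul_pos (sub_pos.mpr hr) (show (0:ℝ) < r ^ 2 + 2 * M * r + 4 * M ^ 2 by positivity)]
      nlinarith [mul_le_mul_of_nonneg_left h8 ht0.le]
    have h1r : 1 + rstar r ^ 2 ≤ 1 + 2 * M ^ 2 + 8 * M ^ 2 * (Real.log t) ^ 2 := by
      rw [hrstar_eq]
      nlinarith [sq_nonneg (M * (t - 1) - 2 * M * Real.log t),
        mul_le_mul_of_nonneg_left (show (t - 1) ^ 2 ≤ (1:ℝ) by nlinarith) (sq_nonneg M)]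
    calc VL r * (1 + rstar r ^ 2)
        ≤ (t / (8 * M ^ 2)) * (1 + 2 * M ^ 2 + 8 * M ^ 2 * (Real.log t) ^ 2) :=
          mul_le_mul hVLb h1r (by positivity) (by positivity)
      _ = t * (1 + 2 * M ^ 2) / (8 * M ^ 2) + t * (Real.log t) ^ 2 := by
          field_simp
      _ ≤ (1 + 2 * M ^ 2) / (8 * M ^ 2) + 4 := by
          have h1 : t * (1 + 2 * M ^ 2) / (8 * M ^ 2) ≤ (1 + 2 * M ^ 2) / (8 * M ^ 2) := by
            rw [div_le_div_iff₀ (by positivity) (by positivity)]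
            nlinarith [mul_nonneg (sub_nonneg.mpr hcase)
              (mul_nonneg (by positivity : (0:ℝ) ≤ 1 + 2 * M ^ 2)
                (by positivity : (0:ℝ) ≤ 8 * M ^ 2))]
          linarith
      _ ≤ (1 + 2 * M ^ 2) / (8 * M ^ 2) + 1 / (9 * M ^ 2) + 13 := by
          have : (0:ℝ) ≤ 1 / (9 * M ^ 2) := by positivity
          linarith
  · -- far region: r > 3M
    push_neg at hcase
    have hr3 : 3 * M < r := by nlinarith
    have hlt : Real.log t ≤ t - 1 := Real.log_le_sub_one_of_pos ht0
    have hlog0 : 0 ≤ Real.log t := Real.log_nonneg hcase.le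
    have hrs0 : 0 ≤ rstar r := by rw [hrstar_eq]; nlinarith
    have hrsb : rstar r ≤ 3 * r := by rw [hrstar_eq]; nlinarith
    have hrs2 : rstar r ^ 2 ≤ 9 * r ^ 2 := by nlinarith
    have hVLb : VL r ≤ 1 / r ^ 2 := by
      rw [hVLr]
      rw [div_le_div_iff₀ (by positivity) (by positivity)]
      nlinarith
    calc VL r * (1 + rstar r ^ 2)
        ≤ (1 / r ^ 2) * (1 + 9 * r ^ 2) :=
          mul_le_mul hVLb (by linarith) (by positivity) (by positivity)
      _ = 1 / r ^ 2 + 9 := by field_simp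
      _ ≤ 1 / (9 * M ^ 2) + 9 := by
          have : 9 * M ^ 2 ≤ r ^ 2 := by nlinarith
          have h2 : (0:ℝ) < 9 * M ^ 2 := by positivity
          have := one_div_le_one_div_of_le h2 this
          linarith
      _ ≤ (1 + 2 * M ^ 2) / (8 * M ^ 2) + 1 / (9 * M ^ 2) + 13 := by
          have : (0:ℝ) ≤ (1 + 2 * M ^ 2) / (8 * M ^ 2) := by positivity
          linarith
end

section
/- Let V : ℝ → [0, ∞) be a measurable function with V(x) ≥ c > 0 for all x ∈ [−2, 2]. Then there exists a constant C > 0 (depending only on c) such that for every t ∈ ℝ and all Schwartz functions v, w : ℝ → ℝ, (1/4)∫_ℝ (t − x)²(w(x) − v'(x))² dx + (1/4)∫_ℝ (t + x)²(w(x) + v'(x))² dx + (1/2)∫_ℝ (t² + x²)·V(x)·v(x)² dx ≥ C·∫_ℝ ((t² + x²)/(1 + x²))·v(x)² dx. -/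
/-!
Minimising pointwise in `w` turns the two kinetic terms into `∫ W v'²` with
`W = (t² - x²)² / (2(t² + x²))`. The multiplier `φ(x) = x(x² - t²)/(1 + x²)` vanishes where `W`
does, satisfies `φ² ≤ 2GW` for the weight `G = (t² + x²)/(1 + x²)`, and has `φ' ≥ 3G/5` for
`|x| ≥ 2` and `φ' ≥ -t²` everywhere. Since `∫ (φv²)' = 0`, absorbing `2φvv'` by AM-GM gives
`∫ G v² ≤ 25 ∫ W v'² + 5 ∫_{[-2,2]} (t² + x²) v²`, and on `[-2,2]` the potential term dominates
`c (t² + x²) v² / 2`.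
-/

open MeasureTheory Set SchwartzMap

lemma SchwartzMap.integrable_mul_mul_of_abs_le (f g : 𝓢(ℝ, ℝ)) {h : ℝ → ℝ}
    (hh : AEStronglyMeasurable h) {C : ℝ} (hC : ∀ x, |h x| ≤ C * (1 + x ^ 2)) :
    Integrable fun x => h x * (f x * g x) := by
  obtain ⟨M, -, hM⟩ := f.decay 0 0
  have hg : Integrable fun x => C * M * (‖x‖ ^ 0 * ‖g x‖ + ‖x‖ ^ 2 * ‖g x‖) :=
    ((g.integrable_pow_mul volume 0).add (g.integrable_pow_mul volume 2)).const_mul _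
  refine hg.mono' (hh.mul (f.continuous.mul g.continuous).aestronglyMeasurable)
    (Filter.Eventually.of_forall fun x => ?_)
  have hf : |f x| ≤ M := by simpa using hM x
  simp only [norm_mul, Real.norm_eq_abs, pow_zero, one_mul, sq_abs]
  calc |h x| * (|f x| * |g x|) ≤ C * (1 + x ^ 2) * (M * |g x|) :=
        mul_le_mul (hC x) (mul_le_mul_of_nonneg_right hf (abs_nonneg _)) (by positivity)
          ((abs_nonneg _).trans (hC x))
    _ = C * M * (|g x| + x ^ 2 * |g x|) := by ring

lemma neg_le_two_mul_mul_mul_of_sq_le {a b m : ℝ} (ha : 0 ≤ a) (hm : 0 ≤ m) (hb : b ^ 2 ≤ a * m)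
    (u p : ℝ) : -(a * u ^ 2 + m * p ^ 2) ≤ 2 * b * u * p := by
  refine (abs_le_of_sq_le_sq' ?_ (by positivity)).1
  nlinarith [sq_nonneg (a * u ^ 2 - m * p ^ 2), mul_nonneg (sub_nonneg.2 hb) (sq_nonneg (u * p))]

namespace ConformalCharge

noncomputable def reducedWeight (t x : ℝ) : ℝ := (t ^ 2 - x ^ 2) ^ 2 / (2 * (t ^ 2 + x ^ 2))

noncomputable def hardyMultiplier (t x : ℝ) : ℝ := x * (x ^ 2 - t ^ 2) / (1 + x ^ 2)

noncomputable def hardyMultiplierDeriv (t x : ℝ) : ℝ :=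
  (x ^ 4 + (3 + t ^ 2) * x ^ 2 - t ^ 2) / (1 + x ^ 2) ^ 2

lemma eq_zero_and_eq_zero_of_sq_add_sq_eq_zero {t x : ℝ} (h : t ^ 2 + x ^ 2 = 0) :
    t = 0 ∧ x = 0 :=
  mul_self_add_mul_self_eq_zero.1 (by simpa only [sq] using h)

lemma reducedWeight_mul_sq_le (t x w d : ℝ) :
    reducedWeight t x * d ^ 2
      ≤ 1 / 4 * (t - x) ^ 2 * (w - d) ^ 2 + 1 / 4 * (t + x) ^ 2 * (w + d) ^ 2 := by
  unfold reducedWeight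
  rcases (by positivity : (0:ℝ) ≤ t ^ 2 + x ^ 2).eq_or_lt with h | h
  · obtain ⟨rfl, rfl⟩ := eq_zero_and_eq_zero_of_sq_add_sq_eq_zero h.symm
    simp
  · rw [div_mul_eq_mul_div, div_le_iff₀ (by positivity)]
    nlinarith [sq_nonneg ((t - x) ^ 2 * (w - d) + (t + x) ^ 2 * (w + d))]

lemma reducedWeight_nonneg (t x : ℝ) : 0 ≤ reducedWeight t x := by
  unfold reducedWeight; positivity

lemma reducedWeight_le (t x : ℝ) : reducedWeight t x ≤ (t ^ 2 + x ^ 2) / 2 :=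
  div_le_of_le_mul₀ (by positivity) (by positivity) (by nlinarith [sq_nonneg (t * x)])

lemma hardyMultiplier_sq_le (t x : ℝ) :
    hardyMultiplier t x ^ 2 ≤ 2 * ((t ^ 2 + x ^ 2) / (1 + x ^ 2)) * reducedWeight t x := by
  unfold hardyMultiplier reducedWeight
  rcases (by positivity : (0:ℝ) ≤ t ^ 2 + x ^ 2).eq_or_lt with h | h
  · obtain ⟨rfl, rfl⟩ := eq_zero_and_eq_zero_of_sq_add_sq_eq_zero h.symm
    simp
  · have : 2 * ((t ^ 2 + x ^ 2) / (1 + x ^ 2)) * ((t ^ 2 - x ^ 2) ^ 2 / (2 * (t ^ 2 + x ^ 2)))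
        = (x ^ 2 - t ^ 2) ^ 2 / (1 + x ^ 2) := by
      field_simp; ring
    rw [this, div_pow, div_le_div_iff₀ (by positivity) (by positivity)]
    nlinarith [sq_nonneg (x ^ 2 - t ^ 2), mul_nonneg (sq_nonneg (x ^ 2 - t ^ 2)) (sq_nonneg x)]

lemma hasDerivAt_hardyMultiplier (t x : ℝ) :
    HasDerivAt (hardyMultiplier t) (hardyMultiplierDeriv t x) x := by
  have hpos : (1 : ℝ) + x ^ 2 ≠ 0 := by positivity
  refine (((hasDerivAt_id' x).fun_mul ((hasDerivAt_pow 2 x).sub_const (t ^ 2))).fun_div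
    ((hasDerivAt_pow 2 x).const_add 1) hpos).congr_deriv ?_
  rw [hardyMultiplierDeriv]
  field_simp
  ring

lemma le_hardyMultiplierDeriv (t x : ℝ) :
    3 / 5 * ((t ^ 2 + x ^ 2) / (1 + x ^ 2)) - 2 * (Icc (-2) 2).indicator (fun y => t ^ 2 + y ^ 2) x
      ≤ hardyMultiplierDeriv t x := by
  unfold hardyMultiplierDeriv
  by_cases hx : x ∈ Icc (-2 : ℝ) 2
  · rw [indicator_of_mem hx]
    have hlower : -t ^ 2 ≤ (x ^ 4 + (3 + t ^ 2) * x ^ 2 - t ^ 2) / (1 + x ^ 2) ^ 2 := by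
      rw [le_div_iff₀ (by positivity)]
      nlinarith [sq_nonneg x, sq_nonneg (t * x), sq_nonneg (t * x ^ 2)]
    have hweight : (t ^ 2 + x ^ 2) / (1 + x ^ 2) ≤ t ^ 2 + x ^ 2 :=
      div_le_self (by positivity) (by nlinarith [sq_nonneg x])
    nlinarith [sq_nonneg x]
  · rw [indicator_of_notMem hx, mul_zero, sub_zero]
    have hx2 : 4 ≤ x ^ 2 := by
      simp only [mem_Icc, not_and_or, not_le] at hx
      rcases hx with hx | hx <;> nlinarith
    rw [← mul_div_assoc, div_le_div_iff₀ (by positivity) (by positivity)]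
    nlinarith [mul_nonneg (sub_nonneg.2 hx2) (sq_nonneg t),
      mul_nonneg (sub_nonneg.2 hx2) (sq_nonneg x)]

lemma weight_mul_sq_le_hardyMultiplier (t x u p : ℝ) :
    2 / 5 * ((t ^ 2 + x ^ 2) / (1 + x ^ 2) * u ^ 2)
      ≤ (hardyMultiplierDeriv t x * u ^ 2 + hardyMultiplier t x * (2 * u * p))
        + 10 * (reducedWeight t x * p ^ 2)
        + 2 * ((Icc (-2) 2).indicator (fun y => t ^ 2 + y ^ 2) x * u ^ 2) := by
  have hderiv := mul_le_mul_of_nonneg_right (le_hardyMultiplierDeriv t x) (sq_nonneg u)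
  have hcross := neg_le_two_mul_mul_mul_of_sq_le
    (a := (t ^ 2 + x ^ 2) / (1 + x ^ 2) / 5) (b := hardyMultiplier t x)
    (m := 10 * reducedWeight t x)
    (by positivity) (by linarith [reducedWeight_nonneg t x])
    (by linarith [hardyMultiplier_sq_le t x]) u p
  linarith

lemma abs_hardyMultiplier_le (t x : ℝ) : |hardyMultiplier t x| ≤ (1 + t ^ 2) * (1 + x ^ 2) := by
  rw [hardyMultiplier, abs_div, abs_of_pos (by positivity : (0:ℝ) < 1 + x ^ 2),
    div_le_iff₀ (by positivity), abs_le]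
  constructor <;> nlinarith [sq_nonneg x, sq_nonneg t, mul_nonneg (sq_nonneg (x - 1)) (sq_nonneg t),
    mul_nonneg (sq_nonneg (x + 1)) (sq_nonneg t), mul_nonneg (sq_nonneg (x - 1)) (sq_nonneg x),
    mul_nonneg (sq_nonneg (x + 1)) (sq_nonneg x), mul_nonneg (sq_nonneg t) (sq_nonneg x)]

lemma abs_hardyMultiplierDeriv_le (t x : ℝ) :
    |hardyMultiplierDeriv t x| ≤ (3 + t ^ 2) * (1 + x ^ 2) := by
  rw [hardyMultiplierDeriv, abs_div, abs_of_pos (by positivity : (0:ℝ) < (1 + x ^ 2) ^ 2),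
    div_le_iff₀ (by positivity), abs_le]
  constructor <;> nlinarith [sq_nonneg x, sq_nonneg t, mul_nonneg (sq_nonneg x) (sq_nonneg t),
    mul_nonneg (mul_nonneg (sq_nonneg x) (sq_nonneg t)) (sq_nonneg x), pow_nonneg (sq_nonneg x) 3]

lemma integrable_weight_mul_sq (t : ℝ) (u : 𝓢(ℝ, ℝ)) :
    Integrable fun x => (t ^ 2 + x ^ 2) / (1 + x ^ 2) * u x ^ 2 := by
  simp only [sq (u _)]
  refine integrable_mul_mul_of_abs_le u u (by fun_prop : Measurable _).aestronglyMeasurable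
    (C := 1 + t ^ 2) fun x => ?_
  rw [abs_of_nonneg (by positivity), div_le_iff₀ (by positivity)]
  nlinarith [sq_nonneg x, sq_nonneg t, mul_nonneg (sq_nonneg x) (sq_nonneg t)]

lemma integrable_reducedWeight_mul_deriv_sq (t : ℝ) (u : 𝓢(ℝ, ℝ)) :
    Integrable fun x => reducedWeight t x * deriv u x ^ 2 := by
  have := integrable_mul_mul_of_abs_le (derivCLM ℝ ℝ u) (derivCLM ℝ ℝ u)
    (by unfold reducedWeight; fun_prop : Measurable fun x => reducedWeight t x).aestronglyMeasurable
    (C := 1 + t ^ 2)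
    fun x => by
      rw [abs_of_nonneg (reducedWeight_nonneg t x)]
      nlinarith [reducedWeight_le t x, sq_nonneg x, sq_nonneg t,
        mul_nonneg (sq_nonneg x) (sq_nonneg t)]
  simpa only [derivCLM_apply, ← sq] using this

lemma integrable_indicator_mul_sq (t : ℝ) (u : 𝓢(ℝ, ℝ)) :
    Integrable fun x => (Icc (-2) 2).indicator (fun y => t ^ 2 + y ^ 2) x * u x ^ 2 := by
  simp only [sq (u _)]
  refine integrable_mul_mul_of_abs_le u u
    ((by fun_prop : Measurable fun y : ℝ => t ^ 2 + y ^ 2).indicator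
      measurableSet_Icc).aestronglyMeasurable (C := 1 + t ^ 2) fun x => ?_
  by_cases hx : x ∈ Icc (-2 : ℝ) 2
  · rw [indicator_of_mem hx, abs_of_nonneg (by positivity)]
    nlinarith [sq_nonneg x, sq_nonneg t, mul_nonneg (sq_nonneg x) (sq_nonneg t)]
  · rw [indicator_of_notMem hx, abs_zero]
    positivity

lemma continuous_hardyMultiplier (t : ℝ) : Continuous (hardyMultiplier t) :=
  continuous_iff_continuousAt.2 fun x => (hasDerivAt_hardyMultiplier t x).continuousAt

lemma integrable_hardyMultiplier_mul_sq (t : ℝ) (u : 𝓢(ℝ, ℝ)) :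
    Integrable fun x => hardyMultiplier t x * u x ^ 2 := by
  simp only [sq (u _)]
  exact integrable_mul_mul_of_abs_le u u (continuous_hardyMultiplier t).aestronglyMeasurable
    (abs_hardyMultiplier_le t)

lemma integrable_deriv_hardyMultiplier_mul_sq (t : ℝ) (u : 𝓢(ℝ, ℝ)) :
    Integrable fun x =>
      hardyMultiplierDeriv t x * u x ^ 2 + hardyMultiplier t x * (2 * u x * deriv u x) := by
  have h₁ : Integrable fun x => hardyMultiplierDeriv t x * u x ^ 2 := by
    simp only [sq (u _)]
    exact integrable_mul_mul_of_abs_le u u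
      (by unfold hardyMultiplierDeriv; fun_prop : Measurable _).aestronglyMeasurable
      (abs_hardyMultiplierDeriv_le t)
  have h₂ := integrable_mul_mul_of_abs_le u (derivCLM ℝ ℝ u)
    (h := fun x => 2 * hardyMultiplier t x)
    ((continuous_hardyMultiplier t).const_mul 2).aestronglyMeasurable (C := 2 * (1 + t ^ 2))
    fun x => by
      rw [abs_mul, abs_two, mul_assoc]
      exact mul_le_mul_of_nonneg_left (abs_hardyMultiplier_le t x) zero_le_two
  simp only [derivCLM_apply] at h₂
  exact h₁.add (h₂.congr (Filter.Eventually.of_forall fun x => by ring))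

lemma integral_deriv_hardyMultiplier_mul_sq (t : ℝ) (u : 𝓢(ℝ, ℝ)) :
    ∫ x, (hardyMultiplierDeriv t x * u x ^ 2 + hardyMultiplier t x * (2 * u x * deriv u x))
      = 0 := by
  refine integral_eq_zero_of_hasDerivAt_of_integrable (fun x => ?_)
    (integrable_deriv_hardyMultiplier_mul_sq t u) (integrable_hardyMultiplier_mul_sq t u)
  exact ((hasDerivAt_hardyMultiplier t x).fun_mul
    (u.differentiableAt.hasDerivAt.fun_pow 2)).congr_deriv (by ring)

theorem integral_weight_mul_sq_le (t : ℝ) (u : 𝓢(ℝ, ℝ)) :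
    ∫ x, (t ^ 2 + x ^ 2) / (1 + x ^ 2) * u x ^ 2
      ≤ 25 * (∫ x, reducedWeight t x * deriv u x ^ 2)
        + 5 * ∫ x, (Icc (-2) 2).indicator (fun y => t ^ 2 + y ^ 2) x * u x ^ 2 := by
  have hD := integrable_deriv_hardyMultiplier_mul_sq t u
  have hW := integrable_reducedWeight_mul_deriv_sq t u
  have hI := integrable_indicator_mul_sq t u
  have hDW : Integrable fun x => hardyMultiplierDeriv t x * u x ^ 2
      + hardyMultiplier t x * (2 * u x * deriv u x) + 10 * (reducedWeight t x * deriv u x ^ 2) :=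
    hD.add (hW.const_mul 10)
  suffices 2 / 5 * ∫ x, (t ^ 2 + x ^ 2) / (1 + x ^ 2) * u x ^ 2
      ≤ 10 * (∫ x, reducedWeight t x * deriv u x ^ 2)
        + 2 * ∫ x, (Icc (-2) 2).indicator (fun y => t ^ 2 + y ^ 2) x * u x ^ 2 by linarith
  calc 2 / 5 * ∫ x, (t ^ 2 + x ^ 2) / (1 + x ^ 2) * u x ^ 2
      = ∫ x, 2 / 5 * ((t ^ 2 + x ^ 2) / (1 + x ^ 2) * u x ^ 2) := (integral_const_mul _ _).symm
    _ ≤ ∫ x, (hardyMultiplierDeriv t x * u x ^ 2 + hardyMultiplier t x * (2 * u x * deriv u x)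
          + 10 * (reducedWeight t x * deriv u x ^ 2)
          + 2 * ((Icc (-2) 2).indicator (fun y => t ^ 2 + y ^ 2) x * u x ^ 2)) :=
      integral_mono ((integrable_weight_mul_sq t u).const_mul _) (hDW.add (hI.const_mul 2))
        fun x => weight_mul_sq_le_hardyMultiplier t x (u x) (deriv u x)
    _ = 10 * (∫ x, reducedWeight t x * deriv u x ^ 2)
          + 2 * ∫ x, (Icc (-2) 2).indicator (fun y => t ^ 2 + y ^ 2) x * u x ^ 2 := by
      rw [integral_add hDW (hI.const_mul 2), integral_add hD (hW.const_mul 10),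
        integral_deriv_hardyMultiplier_mul_sq, integral_const_mul, integral_const_mul, zero_add]

lemma ofReal_mul_lintegral_weight_mul_sq_le {c : ℝ} (hc : 0 ≤ c) (t : ℝ) (u : 𝓢(ℝ, ℝ)) :
    ENNReal.ofReal (min c 1 / 25) * ∫⁻ x, ENNReal.ofReal ((t ^ 2 + x ^ 2) / (1 + x ^ 2) * u x ^ 2)
      ≤ ∫⁻ x, ENNReal.ofReal (reducedWeight t x * deriv u x ^ 2
          + c / 2 * ((Icc (-2) 2).indicator (fun y => t ^ 2 + y ^ 2) x * u x ^ 2)) := by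
  have hW := integrable_reducedWeight_mul_deriv_sq t u
  have hI := integrable_indicator_mul_sq t u
  have hW0 : ∀ x, 0 ≤ reducedWeight t x * deriv u x ^ 2 :=
    fun x => mul_nonneg (reducedWeight_nonneg t x) (sq_nonneg _)
  have hI0 : ∀ x, 0 ≤ (Icc (-2) 2).indicator (fun y => t ^ 2 + y ^ 2) x * u x ^ 2 :=
    fun x => mul_nonneg (indicator_nonneg (fun y _ => by positivity) x) (sq_nonneg _)
  have hsum : Integrable fun x => reducedWeight t x * deriv u x ^ 2
      + c / 2 * ((Icc (-2) 2).indicator (fun y => t ^ 2 + y ^ 2) x * u x ^ 2) :=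
    hW.add (hI.const_mul _)
  rw [← ofReal_integral_eq_lintegral_ofReal (integrable_weight_mul_sq t u)
      (Filter.Eventually.of_forall fun x => by positivity), ← ENNReal.ofReal_mul (by positivity),
    ← ofReal_integral_eq_lintegral_ofReal hsum
      (Filter.Eventually.of_forall fun x =>
        add_nonneg (hW0 x) (mul_nonneg (by positivity) (hI0 x))),
    integral_add hW (hI.const_mul _), integral_const_mul]
  refine ENNReal.ofReal_le_ofReal ?_
  have hJ : 0 ≤ ∫ x, reducedWeight t x * deriv u x ^ 2 := integral_nonneg hW0
  have hT : 0 ≤ ∫ x, (Icc (-2) 2).indicator (fun y => t ^ 2 + y ^ 2) x * u x ^ 2 :=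
    integral_nonneg hI0
  calc _ ≤ min c 1 / 25 * (25 * (∫ x, reducedWeight t x * deriv u x ^ 2)
        + 5 * ∫ x, (Icc (-2) 2).indicator (fun y => t ^ 2 + y ^ 2) x * u x ^ 2) :=
        mul_le_mul_of_nonneg_left (integral_weight_mul_sq_le t u) (by positivity)
    _ ≤ _ := by
        nlinarith [mul_le_mul_of_nonneg_right (min_le_left c 1) hT,
          mul_le_mul_of_nonneg_right (min_le_right c 1) hJ]

lemma reducedWeight_mul_sq_add_indicator_le {V : ℝ → ℝ} {c : ℝ} (hV0 : ∀ x, 0 ≤ V x)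
    (hVc : ∀ x ∈ Icc (-2 : ℝ) 2, c ≤ V x) (t x w d u : ℝ) :
    reducedWeight t x * d ^ 2 + c / 2 * ((Icc (-2) 2).indicator (fun y => t ^ 2 + y ^ 2) x * u ^ 2)
      ≤ 1 / 4 * (t - x) ^ 2 * (w - d) ^ 2 + 1 / 4 * (t + x) ^ 2 * (w + d) ^ 2
        + 1 / 2 * (t ^ 2 + x ^ 2) * V x * u ^ 2 := by
  have hpot : c * (Icc (-2) 2).indicator (fun y => t ^ 2 + y ^ 2) x ≤ (t ^ 2 + x ^ 2) * V x := by
    by_cases hx : x ∈ Icc (-2 : ℝ) 2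
    · rw [indicator_of_mem hx, mul_comm]
      exact mul_le_mul_of_nonneg_left (hVc x hx) (by positivity)
    · rw [indicator_of_notMem hx, mul_zero]
      exact mul_nonneg (by positivity) (hV0 x)
  nlinarith [reducedWeight_mul_sq_le t x w d, mul_le_mul_of_nonneg_right hpot (sq_nonneg u)]

end ConformalCharge

open ConformalCharge

/-- Let `V : ℝ → [0, ∞)` be a measurable function with
`V(x) ≥ c > 0` for all `x ∈ [−2, 2]`.  Then there exists a constant `C > 0`
(depending only on `c`) such that for every `t ∈ ℝ` and all Schwartz functions
`v, w : ℝ → ℝ`,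
`(1/4)∫ (t − x)²(w − v')² + (1/4)∫ (t + x)²(w + v')² + (1/2)∫ (t² + x²)·V·v²`
`≥ C·∫ ((t² + x²)/(1 + x²))·v²`. -/
theorem conformal_charge_density_lower_bound (c : ℝ) (hc : 0 < c) :
    ∃ C : ℝ, 0 < C ∧
      ∀ V : ℝ → ℝ, Measurable V → (∀ x : ℝ, 0 ≤ V x) →
        (∀ x ∈ Set.Icc (-2 : ℝ) 2, c ≤ V x) →
        ∀ (t : ℝ) (v w : SchwartzMap ℝ ℝ),
          ENNReal.ofReal C *
              ∫⁻ x : ℝ, ENNReal.ofReal ((t ^ 2 + x ^ 2) / (1 + x ^ 2) * (v x) ^ 2)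
            ≤ (∫⁻ x : ℝ, ENNReal.ofReal
                  ((1 / 4) * (t - x) ^ 2 * (w x - deriv v x) ^ 2))
              + (∫⁻ x : ℝ, ENNReal.ofReal
                  ((1 / 4) * (t + x) ^ 2 * (w x + deriv v x) ^ 2))
              + (∫⁻ x : ℝ, ENNReal.ofReal
                  ((1 / 2) * (t ^ 2 + x ^ 2) * V x * (v x) ^ 2)) := by
  refine ⟨min c 1 / 25, by positivity, fun V _ hV0 hVc t v w => ?_⟩
  calc _ ≤ _ := ofReal_mul_lintegral_weight_mul_sq_le hc.le t v
    _ ≤ ∫⁻ x, (ENNReal.ofReal ((1 / 4) * (t - x) ^ 2 * (w x - deriv v x) ^ 2)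
          + ENNReal.ofReal ((1 / 4) * (t + x) ^ 2 * (w x + deriv v x) ^ 2)
          + ENNReal.ofReal ((1 / 2) * (t ^ 2 + x ^ 2) * V x * (v x) ^ 2)) := by
        refine lintegral_mono fun x => ?_
        rw [← ENNReal.ofReal_add (by positivity) (by positivity),
          ← ENNReal.ofReal_add (by positivity) (mul_nonneg (mul_nonneg (by positivity) (hV0 x))
            (sq_nonneg _))]
        exact ENNReal.ofReal_le_ofReal
          (reducedWeight_mul_sq_add_indicator_le hV0 hVc t x (w x) (deriv v x) (v x))
    _ = _ := by rw [lintegral_add_left (by fun_prop), lintegral_add_left (by fun_prop)]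
end

section
/- Let ℋ be a real Hilbert space, H a bounded self-adjoint linear operator on ℋ, and A, G bounded linear operators on ℋ such that ⟨Hψ, Aψ⟩ − ⟨ψ, A(Hψ)⟩ = ‖Gψ‖² for all ψ ∈ ℋ. If φ : ℝ → ℋ is twice continuously differentiable and satisfies φ''(t) + H(φ(t)) = 0 for all t, then for all real numbers 0 ≤ T, ∫_0^T ‖G φ(t)‖² dt = ( ⟨φ(T), A φ'(T)⟩ − ⟨φ'(T), A φ(T)⟩ ) − ( ⟨φ(0), A φ'(0)⟩ − ⟨φ'(0), A φ(0)⟩ ). In particular, ∫_0^T ‖G φ(t)‖² dt ≤ 2‖A‖·( ‖φ(T)‖‖φ'(T)‖ + ‖φ(0)‖‖φ'(0)‖ ). -/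
/-!
Along a solution of `φ'' + Hφ = 0`, the antisymmetrised pairing `⟪φ, Aφ'⟫ - ⟪φ', Aφ⟫` has
derivative `⟪φ, Aφ''⟫ - ⟪φ'', Aφ⟫ = ⟪Hφ, Aφ⟫ - ⟪φ, A(Hφ)⟫ = ‖Gφ‖²` (the `⟪φ', Aφ'⟫` terms cancel),
so the spacetime integral is its increment by the fundamental theorem of calculus, and each
endpoint value is at most `2‖A‖‖φ‖‖φ'‖` in absolute value.
-/

open scoped RealInnerProductSpace

section AntisymmPairing

variable {E : Type*} [NormedAddCommGroup E] [InnerProductSpace ℝ E]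

def antisymmPairing (A : E →L[ℝ] E) (x y : E) : ℝ := ⟪x, A y⟫ - ⟪y, A x⟫

theorem abs_inner_map_le_opNorm (A : E →L[ℝ] E) (x y : E) :
    |⟪x, A y⟫| ≤ ‖A‖ * (‖x‖ * ‖y‖) :=
  calc |⟪x, A y⟫| ≤ ‖x‖ * ‖A y‖ := abs_real_inner_le_norm x (A y)
    _ ≤ ‖x‖ * (‖A‖ * ‖y‖) := by gcongr; exact A.le_opNorm y
    _ = ‖A‖ * (‖x‖ * ‖y‖) := by ring

theorem abs_antisymmPairing_le (A : E →L[ℝ] E) (x y : E) :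
    |antisymmPairing A x y| ≤ 2 * ‖A‖ * (‖x‖ * ‖y‖) := by
  have hxy := abs_inner_map_le_opNorm A x y
  have hyx := abs_inner_map_le_opNorm A y x
  rw [mul_comm ‖y‖] at hyx
  calc |antisymmPairing A x y| ≤ |⟪x, A y⟫| + |⟪y, A x⟫| := abs_sub _ _
    _ ≤ 2 * ‖A‖ * (‖x‖ * ‖y‖) := by linarith

theorem hasDerivAt_antisymmPairing (A : E →L[ℝ] E) {φ φ' : ℝ → E} {a : E} {t : ℝ}
    (hφ : HasDerivAt φ (φ' t) t) (hφ' : HasDerivAt φ' a t) :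
    HasDerivAt (fun s => antisymmPairing A (φ s) (φ' s)) (antisymmPairing A (φ t) a) t := by
  have hAφ' : HasDerivAt (fun s => A (φ' s)) (A a) t := A.hasFDerivAt.comp_hasDerivAt t hφ'
  have hAφ : HasDerivAt (fun s => A (φ s)) (A (φ' t)) t := A.hasFDerivAt.comp_hasDerivAt t hφ
  refine ((hφ.inner ℝ hAφ').sub (hφ'.inner ℝ hAφ)).congr_deriv ?_
  simp only [antisymmPairing]
  ring

end AntisymmPairing

theorem propagation_observable_spacetime_estimate_general
    {ℋ : Type*} [NormedAddCommGroup ℋ] [InnerProductSpace ℝ ℋ]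
    (H A G : ℋ →L[ℝ] ℋ)
    (hcomm : ∀ ψ : ℋ, ⟪H ψ, A ψ⟫ - ⟪ψ, A (H ψ)⟫ = ‖G ψ‖ ^ 2)
    (φ φ' φ'' : ℝ → ℋ)
    (hφ : ∀ t : ℝ, HasDerivAt φ (φ' t) t)
    (hφ' : ∀ t : ℝ, HasDerivAt φ' (φ'' t) t)
    (heq : ∀ t : ℝ, φ'' t + H (φ t) = 0)
    (T : ℝ) :
    (∫ t in (0 : ℝ)..T, ‖G (φ t)‖ ^ 2)
        = (⟪φ T, A (φ' T)⟫ - ⟪φ' T, A (φ T)⟫)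
          - (⟪φ 0, A (φ' 0)⟫ - ⟪φ' 0, A (φ 0)⟫) ∧
    (∫ t in (0 : ℝ)..T, ‖G (φ t)‖ ^ 2)
        ≤ 2 * ‖A‖ * (‖φ T‖ * ‖φ' T‖ + ‖φ 0‖ * ‖φ' 0‖) := by
  have hderiv : ∀ t, HasDerivAt (fun s => antisymmPairing A (φ s) (φ' s)) (‖G (φ t)‖ ^ 2) t := by
    intro t
    convert hasDerivAt_antisymmPairing A (hφ t) (hφ' t) using 1
    rw [← hcomm, antisymmPairing, eq_neg_of_add_eq_zero_left (heq t)]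
    simp only [map_neg, inner_neg_left, inner_neg_right]
    ring
  have hcont : Continuous fun t => ‖G (φ t)‖ ^ 2 := by
    have : Continuous φ := continuous_iff_continuousAt.2 fun t => (hφ t).continuousAt
    fun_prop
  have hftc : (∫ t in (0 : ℝ)..T, ‖G (φ t)‖ ^ 2)
      = antisymmPairing A (φ T) (φ' T) - antisymmPairing A (φ 0) (φ' 0) :=
    intervalIntegral.integral_eq_sub_of_hasDerivAt (fun t _ => hderiv t)
      (hcont.intervalIntegrable 0 T)
  refine ⟨hftc, ?_⟩
  rw [hftc]
  have hT := abs_antisymmPairing_le A (φ T) (φ' T)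
  have h0 := abs_antisymmPairing_le A (φ 0) (φ' 0)
  linarith [le_abs_self (antisymmPairing A (φ T) (φ' T)),
    neg_abs_le (antisymmPairing A (φ 0) (φ' 0))]

/-- Let `ℋ` be a real Hilbert space, `H` a bounded self-adjoint
linear operator on `ℋ`, and `A, G` bounded linear operators on `ℋ` such that
`⟨Hψ, Aψ⟩ − ⟨ψ, A(Hψ)⟩ = ‖Gψ‖²` for all `ψ ∈ ℋ`.  If `φ : ℝ → ℋ` is twice
continuously differentiable and satisfies `φ''(t) + H(φ(t)) = 0` for all `t`, then
for all real numbers `0 ≤ T`,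
`∫_0^T ‖Gφ(t)‖² dt = (⟨φ(T), Aφ'(T)⟩ − ⟨φ'(T), Aφ(T)⟩) − (⟨φ(0), Aφ'(0)⟩ − ⟨φ'(0), Aφ(0)⟩)`.
In particular, `∫_0^T ‖Gφ(t)‖² dt ≤ 2‖A‖·(‖φ(T)‖‖φ'(T)‖ + ‖φ(0)‖‖φ'(0)‖)`. -/
theorem propagation_observable_spacetime_estimate
    {ℋ : Type*} [NormedAddCommGroup ℋ] [InnerProductSpace ℝ ℋ] [CompleteSpace ℋ]
    (H A G : ℋ →L[ℝ] ℋ)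
    (hH : ∀ x y : ℋ, ⟪H x, y⟫ = ⟪x, H y⟫)
    (hcomm : ∀ ψ : ℋ, ⟪H ψ, A ψ⟫ - ⟪ψ, A (H ψ)⟫ = ‖G ψ‖ ^ 2)
    (φ φ' φ'' : ℝ → ℋ)
    (hφ : ∀ t : ℝ, HasDerivAt φ (φ' t) t)
    (hφ' : ∀ t : ℝ, HasDerivAt φ' (φ'' t) t)
    (hφ''cont : Continuous φ'')
    (heq : ∀ t : ℝ, φ'' t + H (φ t) = 0)
    (T : ℝ) (hT : 0 ≤ T) :
    (∫ t in (0 : ℝ)..T, ‖G (φ t)‖ ^ 2)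
        = (⟪φ T, A (φ' T)⟫ - ⟪φ' T, A (φ T)⟫)
          - (⟪φ 0, A (φ' 0)⟫ - ⟪φ' 0, A (φ 0)⟫) ∧
    (∫ t in (0 : ℝ)..T, ‖G (φ t)‖ ^ 2)
        ≤ 2 * ‖A‖ * (‖φ T‖ * ‖φ' T‖ + ‖φ 0‖ * ‖φ' 0‖) :=
  propagation_observable_spacetime_estimate_general H A G hcomm φ φ' φ'' hφ hφ' heq T
end

section
/- For every σ > 1 there is a constant C > 0 (depending only on σ) such that for all b > 0 and every Schwartz function ψ : ℝ → ℝ, b³·∫_ℝ ψ(x)²/(1 + b|x|)^{σ+2} dx ≤ C·( b²·ψ(0)² + b·∫_ℝ ψ'(x)²/(1 + b|x|)^σ dx ). -/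
/-!
Integrating by parts on the half-line `x > 0`,
`b (σ+1) ∫ f² / (1+bx)^(σ+2) = f(0)² + ∫ 2 f f' / (1+bx)^(σ+1)`,
and by AM-GM the cross term is at most half the left-hand side plus
`2/(b(σ+1)) ∫ f'² / (1+bx)^σ`. Absorbing it gives the estimate on each half-line, with
constant `1` since `σ + 1 > 2`; the negative half-line is the positive one for `x ↦ ψ(-x)`.
-/

open MeasureTheory Set Filter Topology

section WeightedHardy

variable {b s M N : ℝ} {f f' g : ℝ → ℝ}

theorem integrable_div_one_add_mul_abs_rpow (hg : Continuous g) (hgM : ∀ x, |g x| ≤ M)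
    (hb : 0 < b) (hs : 1 < s) : Integrable (fun x => g x / (1 + b * |x|) ^ s) := by
  have hw : Integrable (fun x : ℝ => (1 + ‖b * x‖) ^ (-s)) :=
    (integrable_one_add_norm (E := ℝ) (by simpa using hs)).comp_mul_left' hb.ne'
  refine (hw.bdd_mul hg.aestronglyMeasurable (.of_forall hgM)).congr (.of_forall fun x => ?_)
  dsimp only
  rw [norm_mul, Real.norm_of_nonneg hb.le, Real.norm_eq_abs,
    Real.rpow_neg (by positivity), div_eq_mul_inv]

theorem integrable_sq_div_one_add_mul_abs_rpow (hg : Continuous g) (hgM : ∀ x, |g x| ≤ M)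
    (hb : 0 < b) (hs : 1 < s) : Integrable (fun x => g x ^ 2 / (1 + b * |x|) ^ s) :=
  integrable_div_one_add_mul_abs_rpow (hg.pow 2) (M := M ^ 2)
    (fun x => by rw [abs_pow]; exact pow_le_pow_left₀ (abs_nonneg _) (hgM x) 2) hb hs

theorem integrableOn_Ioi_div_one_add_mul_rpow_of_integrable
    (hg : Integrable (fun x : ℝ => g x / (1 + b * |x|) ^ s)) :
    IntegrableOn (fun x => g x / (1 + b * x) ^ s) (Ioi 0) :=
  hg.integrableOn.congr_fun (fun x hx => by simp only [abs_of_pos (mem_Ioi.mp hx)])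
    measurableSet_Ioi

theorem integral_eq_integral_Ioi_add_integral_Ioi_comp_neg (hf : Integrable f) :
    ∫ x, f x = (∫ x in Ioi (0 : ℝ), f x) + ∫ x in Ioi (0 : ℝ), f (-x) := by
  rw [← integral_add_compl (measurableSet_Ioi (a := (0 : ℝ))) hf, compl_Ioi,
    integral_comp_neg_Ioi, neg_zero]

theorem integral_div_one_add_mul_abs_rpow
    (hg : Integrable (fun x : ℝ => g x / (1 + b * |x|) ^ s)) :
    ∫ x, g x / (1 + b * |x|) ^ s
      = (∫ x in Ioi (0 : ℝ), g x / (1 + b * x) ^ s)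
        + ∫ x in Ioi (0 : ℝ), g (-x) / (1 + b * x) ^ s := by
  rw [integral_eq_integral_Ioi_add_integral_Ioi_comp_neg hg]
  congr 1 <;> refine setIntegral_congr_fun measurableSet_Ioi fun x hx => ?_
  · rw [abs_of_pos (mem_Ioi.mp hx)]
  · rw [abs_neg, abs_of_pos (mem_Ioi.mp hx)]

theorem integrableOn_Ioi_two_mul_mul_div_one_add_mul_rpow (hf : Continuous f)
    (hf' : Continuous f') (hfM : ∀ x, |f x| ≤ M) (hf'N : ∀ x, |f' x| ≤ N) (hb : 0 < b)
    (hs : 1 < s) : IntegrableOn (fun x => 2 * f x * f' x / (1 + b * x) ^ s) (Ioi 0) := by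
  refine integrableOn_Ioi_div_one_add_mul_rpow_of_integrable <|
    integrable_div_one_add_mul_abs_rpow (by fun_prop) (M := 2 * (M * N)) (fun x => ?_) hb hs
  rw [mul_assoc, abs_mul, abs_two, abs_mul]
  have := (abs_nonneg (f x)).trans (hfM x)
  gcongr
  exacts [hfM x, hf'N x]

theorem two_mul_div_rpow_le {p a : ℝ} (hp : 0 < p) (ha : 0 < a) (u v : ℝ) :
    2 * u * v / p ^ (s + 1) ≤ a * (u ^ 2 / p ^ (s + 2)) + a⁻¹ * (v ^ 2 / p ^ s) := by
  have hq : 0 < p ^ s := Real.rpow_pos_of_pos hp s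
  rw [Real.rpow_add_one hp.ne', show s + 2 = s + (2 : ℕ) by norm_num,
    Real.rpow_add_natCast hp.ne', ← sub_nonneg]
  have key : a * (u ^ 2 / (p ^ s * p ^ 2)) + a⁻¹ * (v ^ 2 / p ^ s) - 2 * u * v / (p ^ s * p)
      = (a * u - p * v) ^ 2 / (a * p ^ s * p ^ 2) := by
    field_simp
    ring
  rw [key]
  positivity

theorem hasDerivAt_sq_div_one_add_mul_rpow {x : ℝ} (hf : HasDerivAt f (f' x) x)
    (hx : 0 < 1 + b * x) :
    HasDerivAt (fun y => f y ^ 2 / (1 + b * y) ^ (s + 1))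
      (2 * f x * f' x / (1 + b * x) ^ (s + 1) - b * (s + 1) * (f x ^ 2 / (1 + b * x) ^ (s + 2)))
      x := by
  have hw : HasDerivAt (fun y => 1 + b * y) b x := by
    simpa using ((hasDerivAt_id x).const_mul b).const_add 1
  refine ((hf.fun_pow 2).div (hw.rpow_const (p := s + 1) (Or.inl hx.ne'))
    (Real.rpow_pos_of_pos hx _).ne').congr_deriv ?_
  have hq : 0 < (1 + b * x) ^ s := Real.rpow_pos_of_pos hx s
  rw [add_sub_cancel_right, Real.rpow_add_one hx.ne', show s + 2 = s + (2 : ℕ) by norm_num,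
    Real.rpow_add_natCast hx.ne']
  field_simp
  ring

variable (hb : 0 < b) (hf : ∀ x, HasDerivAt f (f' x) x) (hf' : Continuous f')
  (hfM : ∀ x, |f x| ≤ M) (hf'N : ∀ x, |f' x| ≤ N)
include hb hf hf' hfM hf'N

theorem mul_integral_Ioi_sq_div_rpow_eq (hs : 0 < s) :
    b * (s + 1) * ∫ x in Ioi (0 : ℝ), f x ^ 2 / (1 + b * x) ^ (s + 2)
      = f 0 ^ 2 + ∫ x in Ioi (0 : ℝ), 2 * f x * f' x / (1 + b * x) ^ (s + 1) := by
  have hpos : ∀ x : ℝ, 0 ≤ x → 0 < 1 + b * x := fun x hx => by positivity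
  have hfc : Continuous f := continuous_iff_continuousAt.2 fun x => (hf x).continuousAt
  have hsq := integrableOn_Ioi_div_one_add_mul_rpow_of_integrable <|
    integrable_sq_div_one_add_mul_abs_rpow hfc hfM hb (s := s + 2) (by linarith)
  have hcross := integrableOn_Ioi_two_mul_mul_div_one_add_mul_rpow hfc hf' hfM hf'N hb
    (s := s + 1) (by linarith)
  have hweight : Tendsto (fun x => (1 + b * x) ^ (s + 1)) atTop atTop :=
    (tendsto_rpow_atTop (by linarith)).comp
      (tendsto_atTop_add_const_left _ 1 (tendsto_id.const_mul_atTop hb))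
  have hlim : Tendsto (fun x => f x ^ 2 / (1 + b * x) ^ (s + 1)) atTop (𝓝 0) := by
    refine tendsto_of_tendsto_of_tendsto_of_le_of_le' tendsto_const_nhds
      ((tendsto_const_nhds (x := M ^ 2)).div_atTop hweight) ?_ ?_
    all_goals filter_upwards [eventually_ge_atTop 0] with x hx
    · have := hpos x hx
      positivity
    · refine div_le_div_of_nonneg_right ?_ (Real.rpow_pos_of_pos (hpos x hx) _).le
      rw [← sq_abs]
      exact pow_le_pow_left₀ (abs_nonneg _) (hfM x) 2
  have hibp := integral_Ioi_of_hasDerivAt_of_tendsto'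
    (fun x hx => hasDerivAt_sq_div_one_add_mul_rpow (hf x) (hpos x hx))
    (hcross.sub (hsq.const_mul _)) hlim
  rw [integral_sub hcross (hsq.const_mul _), integral_const_mul] at hibp
  simp only [mul_zero, add_zero, Real.one_rpow, div_one] at hibp
  linarith

theorem weighted_hardy_Ioi {σ : ℝ} (hσ : 1 < σ) :
    b * (σ + 1) * ∫ x in Ioi (0 : ℝ), f x ^ 2 / (1 + b * x) ^ (σ + 2)
      ≤ 2 * f 0 ^ 2 + 4 / (b * (σ + 1)) * ∫ x in Ioi (0 : ℝ), f' x ^ 2 / (1 + b * x) ^ σ := by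
  have hfc : Continuous f := continuous_iff_continuousAt.2 fun x => (hf x).continuousAt
  have hsq := integrableOn_Ioi_div_one_add_mul_rpow_of_integrable <|
    integrable_sq_div_one_add_mul_abs_rpow hfc hfM hb (s := σ + 2) (by linarith)
  have hsq' := integrableOn_Ioi_div_one_add_mul_rpow_of_integrable <|
    integrable_sq_div_one_add_mul_abs_rpow hf' hf'N hb hσ
  have hcross := integrableOn_Ioi_two_mul_mul_div_one_add_mul_rpow hfc hf' hfM hf'N hb
    (s := σ + 1) (by linarith)
  have ha : 0 < b * (σ + 1) / 2 := half_pos (mul_pos hb (by linarith))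
  have hcross_le : ∫ x in Ioi (0 : ℝ), 2 * f x * f' x / (1 + b * x) ^ (σ + 1)
      ≤ b * (σ + 1) / 2 * (∫ x in Ioi (0 : ℝ), f x ^ 2 / (1 + b * x) ^ (σ + 2))
        + (b * (σ + 1) / 2)⁻¹ * ∫ x in Ioi (0 : ℝ), f' x ^ 2 / (1 + b * x) ^ σ := by
    rw [← integral_const_mul, ← integral_const_mul,
      ← integral_add (hsq.const_mul _) (hsq'.const_mul _)]
    refine setIntegral_mono_on hcross ((hsq.const_mul _).add (hsq'.const_mul _))
      measurableSet_Ioi fun x hx => two_mul_div_rpow_le ?_ ha _ _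
    have : 0 < x := hx
    positivity
  rw [inv_div] at hcross_le
  have hibp := mul_integral_Ioi_sq_div_rpow_eq hb hf hf' hfM hf'N (s := σ) (by linarith)
  linear_combination 2 * hibp + 2 * hcross_le

theorem weighted_hardy_scale_estimate_Ioi {σ : ℝ} (hσ : 1 < σ) :
    b ^ 3 * ∫ x in Ioi (0 : ℝ), f x ^ 2 / (1 + b * x) ^ (σ + 2)
      ≤ b ^ 2 * f 0 ^ 2 + b * ∫ x in Ioi (0 : ℝ), f' x ^ 2 / (1 + b * x) ^ σ := by
  set A := ∫ x in Ioi (0 : ℝ), f x ^ 2 / (1 + b * x) ^ (σ + 2)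
  set D := ∫ x in Ioi (0 : ℝ), f' x ^ 2 / (1 + b * x) ^ σ
  have hD : 0 ≤ D := setIntegral_nonneg measurableSet_Ioi fun x (hx : 0 < x) => by positivity
  have hσ1 : 0 < σ + 1 := by linarith
  calc b ^ 3 * A = b ^ 2 / (σ + 1) * (b * (σ + 1) * A) := by field_simp
    _ ≤ b ^ 2 / (σ + 1) * (2 * f 0 ^ 2 + 4 / (b * (σ + 1)) * D) := by
        gcongr
        exact weighted_hardy_Ioi hb hf hf' hfM hf'N hσ
    _ = 2 / (σ + 1) * (b ^ 2 * f 0 ^ 2) + 4 / (σ + 1) ^ 2 * (b * D) := by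
        field_simp
    _ ≤ b ^ 2 * f 0 ^ 2 + b * D := by
        refine add_le_add (mul_le_of_le_one_left (by positivity) ?_)
          (mul_le_of_le_one_left (by positivity) ?_)
        · exact (div_le_one hσ1).2 (by linarith)
        · exact (div_le_one (by positivity)).2 (by nlinarith)

end WeightedHardy

/-- For every `σ > 1` there is a constant `C > 0` (depending
only on `σ`) such that for all `b > 0` and every Schwartz function `ψ : ℝ → ℝ`,
`b³·∫ ψ(x)²/(1 + b|x|)^{σ+2} dx ≤ C·(b²·ψ(0)² + b·∫ ψ'(x)²/(1 + b|x|)^σ dx)`. -/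
theorem weighted_hardy_scale_estimate (σ : ℝ) (hσ : 1 < σ) :
    ∃ C : ℝ, 0 < C ∧ ∀ b : ℝ, 0 < b → ∀ ψ : SchwartzMap ℝ ℝ,
      b ^ 3 * ∫ x : ℝ, (ψ x) ^ 2 / (1 + b * |x|) ^ (σ + 2)
        ≤ C * (b ^ 2 * (ψ 0) ^ 2
            + b * ∫ x : ℝ, (deriv ψ x) ^ 2 / (1 + b * |x|) ^ σ) := by
  refine ⟨2, two_pos, fun b hb ψ => ?_⟩
  have hψ : ∀ x, |ψ x| ≤ SchwartzMap.seminorm ℝ 0 0 ψ := fun x => by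
    simpa using SchwartzMap.norm_le_seminorm ℝ ψ x
  have hψ' : ∀ x, |deriv ψ x| ≤ SchwartzMap.seminorm ℝ 0 0 (SchwartzMap.derivCLM ℝ ℝ ψ) :=
    fun x => by simpa using SchwartzMap.norm_le_seminorm ℝ (SchwartzMap.derivCLM ℝ ℝ ψ) x
  have hψ'c : Continuous (deriv ψ) := (ψ.smooth ⊤).continuous_deriv (by simp)
  have hright := weighted_hardy_scale_estimate_Ioi hb ψ.hasDerivAt hψ'c hψ hψ' hσ
  have hleft := weighted_hardy_scale_estimate_Ioi hb (f := fun x => ψ (-x))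
    (f' := fun x => -deriv ψ (-x))
    (fun x => by
      have := (ψ.hasDerivAt (-x)).comp x (hasDerivAt_neg x)
      simp only [Function.comp_def, mul_neg, mul_one] at this
      exact this)
    (hψ'c.comp continuous_neg).neg (fun x => hψ (-x)) (fun x => by simpa using hψ' (-x)) hσ
  simp only [neg_sq, neg_zero] at hleft
  have hD : 0 ≤ ∫ x : ℝ, deriv ψ x ^ 2 / (1 + b * |x|) ^ σ :=
    integral_nonneg fun x => by positivity
  rw [integral_div_one_add_mul_abs_rpow
      (integrable_sq_div_one_add_mul_abs_rpow ψ.continuous hψ hb (by linarith)),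
    integral_div_one_add_mul_abs_rpow (integrable_sq_div_one_add_mul_abs_rpow hψ'c hψ' hb hσ)]
    at *
  linear_combination hright + hleft + mul_nonneg hb.le hD
end

section
/- Let χ : ℝ → [0, ∞) be a continuously differentiable, compactly supported function with χ(0) = 1. Then for every Schwartz function ψ : ℝ → ℝ, 2ψ(0)² ≤ ∫_ℝ ( |χ'(x)| + |x·χ'(x)| + x²·χ(x) )·ψ(x)² dx + 2∫_ℝ χ(x)·ψ'(x)² dx. -/
open MeasureTheory

/-!
With `F = χ ψ²`, which is `C¹` with compact support, `F(0)` is the integral of `F'` over either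
half-line, so `2F(0) ≤ ∫ |F'|`. Since `∫ (x F)' = 0`, the term `χψ²` that appears when `|F'|` is
estimated can be traded for `-x F'`, and the AM–GM bounds `2|χψψ'| ≤ χψ² + χψ'²` and
`2|xχψψ'| ≤ x²χψ² + χψ'²` then produce the right-hand side pointwise.
-/

theorem HasCompactSupport.two_mul_abs_le_integral_abs_deriv {f : ℝ → ℝ} (hf : ContDiff ℝ 1 f)
    (h'f : HasCompactSupport f) (a : ℝ) : 2 * |f a| ≤ ∫ x, |deriv f x| := by
  have hint : Integrable (fun x => |deriv f x|) :=
    ((hf.continuous_deriv le_rfl).integrable_of_hasCompactSupport h'f.deriv).abs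
  have hleft : |f a| ≤ ∫ x in Set.Iic a, |deriv f x| := by
    rw [← h'f.integral_Iic_deriv_eq hf a]
    exact abs_integral_le_integral_abs
  have hright : |f a| ≤ ∫ x in Set.Ioi a, |deriv f x| := by
    rw [← abs_neg, ← h'f.integral_Ioi_deriv_eq hf a]
    exact abs_integral_le_integral_abs
  calc 2 * |f a| ≤ (∫ x in Set.Iic a, |deriv f x|) + ∫ x in Set.Ioi a, |deriv f x| := by linarith
    _ = ∫ x, |deriv f x| :=
      intervalIntegral.integral_Iic_add_Ioi hint.integrableOn hint.integrableOn

theorem HasCompactSupport.integrable_of_eq_zero_of_deriv_eq_zero {f g : ℝ → ℝ}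
    (hf : HasCompactSupport f) (hg : Continuous g)
    (h : ∀ x, f x = 0 → deriv f x = 0 → g x = 0) : Integrable g :=
  hg.integrable_of_hasCompactSupport <| hf.mono' <| Function.support_subset_iff'.2
    fun x hx => h x (image_eq_zero_of_notMem_tsupport hx)
      (Function.notMem_support.1 fun h' => hx (support_deriv_subset h'))

theorem abs_sub_le_localized_energy_density {χ ψ c d : ℝ} (x : ℝ) (hχ : 0 ≤ χ) :
    |c * ψ ^ 2 + χ * (2 * ψ * d)| - (χ * ψ ^ 2 + x * (c * ψ ^ 2 + χ * (2 * ψ * d)))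
      ≤ (|c| + |x * c| + x ^ 2 * χ) * ψ ^ 2 + 2 * (χ * d ^ 2) := by
  have habs : |c * ψ ^ 2 + χ * (2 * ψ * d)| ≤ |c| * ψ ^ 2 + χ * ψ ^ 2 + χ * d ^ 2 := by
    rw [abs_le]
    constructor <;> nlinarith [abs_nonneg c, le_abs_self c, neg_abs_le c, sq_nonneg ψ,
      mul_nonneg hχ (sq_nonneg (ψ + d)), mul_nonneg hχ (sq_nonneg (ψ - d))]
  have hweight : -(x * (c * ψ ^ 2 + χ * (2 * ψ * d)))
      ≤ |x * c| * ψ ^ 2 + x ^ 2 * χ * ψ ^ 2 + χ * d ^ 2 := by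
    nlinarith [neg_abs_le (x * c), sq_nonneg ψ, mul_nonneg hχ (sq_nonneg (x * ψ + d))]
  nlinarith

theorem two_mul_sq_le_localized_energy {χ ψ : ℝ → ℝ} (hχ : ContDiff ℝ 1 χ) (hχ0 : ∀ x, 0 ≤ χ x)
    (hsupp : HasCompactSupport χ) (hψ : ContDiff ℝ 1 ψ) (a : ℝ) :
    2 * (χ a * ψ a ^ 2) ≤ (∫ x, (|deriv χ x| + |x * deriv χ x| + x ^ 2 * χ x) * ψ x ^ 2)
      + 2 * ∫ x, χ x * deriv ψ x ^ 2 := by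
  set F := fun y => χ y * ψ y ^ 2
  set F' := fun y => deriv χ y * ψ y ^ 2 + χ y * (2 * ψ y * deriv ψ y)
  have hF : ∀ x, HasDerivAt F (F' x) x := fun x => by
    refine ((hχ.differentiable one_ne_zero x).hasDerivAt.fun_mul
      ((hψ.differentiable one_ne_zero x).hasDerivAt.fun_pow 2)).congr_deriv ?_
    simp only [F']
    ring
  have hχ'c : Continuous (deriv χ) := hχ.continuous_deriv le_rfl
  have hψ'c : Continuous (deriv ψ) := hψ.continuous_deriv le_rfl
  have hF'int : Integrable fun x => |F' x| :=
    hsupp.integrable_of_eq_zero_of_deriv_eq_zero (by fun_prop) fun x h0 h1 => by simp [F', h0, h1]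
  have hG'int : Integrable fun x => F x + x * F' x :=
    hsupp.integrable_of_eq_zero_of_deriv_eq_zero (by fun_prop) fun x h0 h1 => by
      simp [F, F', h0, h1]
  have hbound : Integrable fun x => (|deriv χ x| + |x * deriv χ x| + x ^ 2 * χ x) * ψ x ^ 2 :=
    hsupp.integrable_of_eq_zero_of_deriv_eq_zero (by fun_prop) fun x h0 h1 => by simp [h0, h1]
  have henergy : Integrable fun x => χ x * deriv ψ x ^ 2 :=
    hsupp.integrable_of_eq_zero_of_deriv_eq_zero (by fun_prop) fun x h0 _ => by simp [h0]
  have ibp : ∫ x, (F x + x * F' x) = 0 :=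
    integral_eq_zero_of_hasDerivAt_of_integrable (f := fun x => x * F x)
      (fun x => by simpa using (hasDerivAt_id' x).fun_mul (hF x)) hG'int
      (hsupp.integrable_of_eq_zero_of_deriv_eq_zero (by fun_prop) fun x h0 _ => by simp [F, h0])
  have hvalue : 2 * F a ≤ ∫ x, |F' x| := by
    have := HasCompactSupport.two_mul_abs_le_integral_abs_deriv (hχ.mul (hψ.pow 2))
      hsupp.mul_right a
    rw [funext fun x => (hF x).deriv] at this
    linarith [le_abs_self (F a)]
  calc 2 * F a ≤ ∫ x, |F' x| := hvalue
    _ = ∫ x, (|F' x| - (F x + x * F' x)) := by rw [integral_sub hF'int hG'int, ibp, sub_zero]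
    _ ≤ ∫ x, ((|deriv χ x| + |x * deriv χ x| + x ^ 2 * χ x) * ψ x ^ 2
          + 2 * (χ x * deriv ψ x ^ 2)) :=
      integral_mono (hF'int.sub hG'int) (hbound.add (henergy.const_mul 2))
        fun x => abs_sub_le_localized_energy_density x (hχ0 x)
    _ = _ := by rw [integral_add hbound (henergy.const_mul 2), integral_const_mul]

/-- Let `χ : ℝ → [0, ∞)` be a continuously differentiable,
compactly supported function with `χ(0) = 1`.  Then for every Schwartz function
`ψ : ℝ → ℝ`,
`2ψ(0)² ≤ ∫ (|χ'| + |x·χ'| + x²·χ)·ψ² dx + 2∫ χ·ψ'² dx`. -/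
theorem pointwise_value_by_localized_energy
    (χ : ℝ → ℝ) (hχ : ContDiff ℝ 1 χ) (hχ0 : ∀ x : ℝ, 0 ≤ χ x)
    (hsupp : HasCompactSupport χ) (hχ1 : χ 0 = 1) :
    ∀ ψ : SchwartzMap ℝ ℝ,
      2 * (ψ 0) ^ 2
        ≤ (∫ x : ℝ, (|deriv χ x| + |x * deriv χ x| + x ^ 2 * χ x) * (ψ x) ^ 2)
          + 2 * ∫ x : ℝ, χ x * (deriv ψ x) ^ 2 := fun ψ => by
  simpa only [hχ1, one_mul] using two_mul_sq_le_localized_energy hχ hχ0 hsupp (ψ.smooth 1) 0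
end

section
/- Let W : ℝ → [0, ∞) be a smooth function such that W and its derivative W' have at most polynomial growth. Let φ : ℝ × ℝ → ℝ be a smooth solution of ∂_t²φ(t,x) = ∂_x²φ(t,x) − W(x)·φ(t,x) which is, together with all its derivatives, Schwartz in x locally uniformly in t. Define the conformal charge E_C(t) = ∫_ℝ [ (t² + x²)·(1/2)( (∂_t φ)² + (∂_x φ)² + W·φ² ) + 2 t x · (∂_t φ)(∂_x φ) ] dx. Then E_C is differentiable in t and for every t, d/dt E_C(t) = ∫_ℝ t·( 2W(x) + x·W'(x) )·φ(t,x)² dx. -/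
open MeasureTheory Filter

noncomputable def pd1 (f : ℝ × ℝ → ℝ) (p : ℝ × ℝ) : ℝ := fderiv ℝ f p (1, 0)
noncomputable def pd2 (f : ℝ × ℝ → ℝ) (p : ℝ × ℝ) : ℝ := fderiv ℝ f p (0, 1)

lemma pd1_contDiff {f : ℝ × ℝ → ℝ} (hf : ContDiff ℝ (⊤ : ℕ∞) f) : ContDiff ℝ (⊤ : ℕ∞) (pd1 f) :=
  (hf.fderiv_right (le_refl _)).clm_apply contDiff_const
lemma pd2_contDiff {f : ℝ × ℝ → ℝ} (hf : ContDiff ℝ (⊤ : ℕ∞) f) : ContDiff ℝ (⊤ : ℕ∞) (pd2 f) :=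
  (hf.fderiv_right (le_refl _)).clm_apply contDiff_const
lemma pd1_iter_contDiff {f : ℝ × ℝ → ℝ} (hf : ContDiff ℝ (⊤ : ℕ∞) f) (i : ℕ) :
    ContDiff ℝ (⊤ : ℕ∞) (pd1^[i] f) := by
  induction i generalizing f with
  | zero => exact hf
  | succ n ih => rw [Function.iterate_succ_apply]; exact ih (pd1_contDiff hf)
lemma pd2_iter_contDiff {f : ℝ × ℝ → ℝ} (hf : ContDiff ℝ (⊤ : ℕ∞) f) (i : ℕ) :
    ContDiff ℝ (⊤ : ℕ∞) (pd2^[i] f) := by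
  induction i generalizing f with
  | zero => exact hf
  | succ n ih => rw [Function.iterate_succ_apply]; exact ih (pd2_contDiff hf)

lemma hasFDerivAt_pd {f : ℝ × ℝ → ℝ} (hf : ContDiff ℝ (⊤ : ℕ∞) f) (v : ℝ × ℝ) (p : ℝ × ℝ) :
    HasFDerivAt (fun q => fderiv ℝ f q v)
      ((ContinuousLinearMap.apply ℝ ℝ v).comp (fderiv ℝ (fderiv ℝ f) p)) p := by
  have h1 : ContDiff ℝ (⊤ : ℕ∞) (fderiv ℝ f) := hf.fderiv_right (le_refl _)
  exact (ContinuousLinearMap.apply ℝ ℝ v).hasFDerivAt.comp p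
    (h1.differentiable (by simp) p).hasFDerivAt
lemma hasDerivAt_pd1 {f : ℝ × ℝ → ℝ} (hf : ContDiff ℝ (⊤ : ℕ∞) f) (s x : ℝ) :
    HasDerivAt (fun u : ℝ => f (u, x)) (pd1 f (s, x)) s :=
  ((hf.differentiable (by simp) (s, x)).hasFDerivAt).comp_hasDerivAt s
    ((hasDerivAt_id s).prodMk (hasDerivAt_const s x))
lemma hasDerivAt_pd2 {f : ℝ × ℝ → ℝ} (hf : ContDiff ℝ (⊤ : ℕ∞) f) (s x : ℝ) :
    HasDerivAt (fun y : ℝ => f (s, y)) (pd2 f (s, x)) x :=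
  ((hf.differentiable (by simp) (s, x)).hasFDerivAt).comp_hasDerivAt x
    ((hasDerivAt_const x s).prodMk (hasDerivAt_id x))
lemma pd_pd_eq {f : ℝ × ℝ → ℝ} (hf : ContDiff ℝ (⊤ : ℕ∞) f) (v w : ℝ × ℝ) (p : ℝ × ℝ) :
    fderiv ℝ (fun q => fderiv ℝ f q v) p w = fderiv ℝ (fderiv ℝ f) p w v := by
  rw [(hasFDerivAt_pd hf v p).fderiv]; rfl
lemma pd_symm {f : ℝ × ℝ → ℝ} (hf : ContDiff ℝ (⊤ : ℕ∞) f) (p : ℝ × ℝ) (v w : ℝ × ℝ) :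
    fderiv ℝ (fderiv ℝ f) p v w = fderiv ℝ (fderiv ℝ f) p w v := by
  apply second_derivative_symmetric (f := f) (f' := fderiv ℝ f)
    (fun y => (hf.differentiable (by simp) y).hasFDerivAt)
    (((hf.fderiv_right (m := (⊤ : ℕ∞)) (by simp)).differentiable (by simp) p).hasFDerivAt)
lemma hd_pd1_pd1 {f : ℝ × ℝ → ℝ} (hf : ContDiff ℝ (⊤ : ℕ∞) f) (s x : ℝ) :
    HasDerivAt (fun u : ℝ => pd1 f (u, x)) (pd1 (pd1 f) (s, x)) s := by
  have h := (hasFDerivAt_pd hf ((1:ℝ), (0:ℝ)) (s, x)).comp_hasDerivAt s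
    ((hasDerivAt_id s).prodMk (hasDerivAt_const s x))
  have e : pd1 (pd1 f) (s, x) = fderiv ℝ (fderiv ℝ f) (s, x) (1, 0) (1, 0) := by
    show fderiv ℝ (fun q => fderiv ℝ f q (1, 0)) (s, x) (1, 0) = _
    rw [pd_pd_eq hf]
  rw [e]; exact h
lemma hd_pd2_pd1 {f : ℝ × ℝ → ℝ} (hf : ContDiff ℝ (⊤ : ℕ∞) f) (s x : ℝ) :
    HasDerivAt (fun u : ℝ => pd2 f (u, x)) (pd1 (pd2 f) (s, x)) s := by
  have h := (hasFDerivAt_pd hf ((0:ℝ), (1:ℝ)) (s, x)).comp_hasDerivAt s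
    ((hasDerivAt_id s).prodMk (hasDerivAt_const s x))
  have e : pd1 (pd2 f) (s, x) = fderiv ℝ (fderiv ℝ f) (s, x) (1, 0) (0, 1) := by
    show fderiv ℝ (fun q => fderiv ℝ f q (0, 1)) (s, x) (1, 0) = _
    rw [pd_pd_eq hf]
  rw [e]; exact h
lemma hd_pd1_pd2 {f : ℝ × ℝ → ℝ} (hf : ContDiff ℝ (⊤ : ℕ∞) f) (s x : ℝ) :
    HasDerivAt (fun y : ℝ => pd1 f (s, y)) (pd2 (pd1 f) (s, x)) x := by
  have h := (hasFDerivAt_pd hf ((1:ℝ), (0:ℝ)) (s, x)).comp_hasDerivAt x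
    ((hasDerivAt_const x s).prodMk (hasDerivAt_id x))
  have e : pd2 (pd1 f) (s, x) = fderiv ℝ (fderiv ℝ f) (s, x) (0, 1) (1, 0) := by
    show fderiv ℝ (fun q => fderiv ℝ f q (1, 0)) (s, x) (0, 1) = _
    rw [pd_pd_eq hf]
  rw [e]; exact h
lemma hd_pd2_pd2 {f : ℝ × ℝ → ℝ} (hf : ContDiff ℝ (⊤ : ℕ∞) f) (s x : ℝ) :
    HasDerivAt (fun y : ℝ => pd2 f (s, y)) (pd2 (pd2 f) (s, x)) x := by
  have h := (hasFDerivAt_pd hf ((0:ℝ), (1:ℝ)) (s, x)).comp_hasDerivAt x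
    ((hasDerivAt_const x s).prodMk (hasDerivAt_id x))
  have e : pd2 (pd2 f) (s, x) = fderiv ℝ (fderiv ℝ f) (s, x) (0, 1) (0, 1) := by
    show fderiv ℝ (fun q => fderiv ℝ f q (0, 1)) (s, x) (0, 1) = _
    rw [pd_pd_eq hf]
  rw [e]; exact h
lemma pd_comm {f : ℝ × ℝ → ℝ} (hf : ContDiff ℝ (⊤ : ℕ∞) f) (p : ℝ × ℝ) :
    pd2 (pd1 f) p = pd1 (pd2 f) p := by
  show fderiv ℝ (fun q => fderiv ℝ f q (1, 0)) p (0, 1)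
      = fderiv ℝ (fun q => fderiv ℝ f q (0, 1)) p (1, 0)
  rw [pd_pd_eq hf, pd_pd_eq hf, pd_symm hf]

lemma iter_repr_snd {φ : ℝ → ℝ → ℝ} (hφ : ContDiff ℝ (⊤ : ℕ∞) (Function.uncurry φ)) :
    ∀ (j : ℕ) (s x : ℝ), iteratedDeriv j (φ s) x = pd2^[j] (Function.uncurry φ) (s, x) := by
  intro j
  induction j with
  | zero => intro s x; simp [Function.uncurry]
  | succ n ih =>
    intro s x
    rw [iteratedDeriv_succ]
    have hfun : iteratedDeriv n (φ s) = fun y => pd2^[n] (Function.uncurry φ) (s, y) :=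
      funext fun y => ih s y
    rw [hfun, Function.iterate_succ_apply']
    exact (hasDerivAt_pd2 (pd2_iter_contDiff hφ n) s x).deriv
lemma iter_repr {φ : ℝ → ℝ → ℝ} (hφ : ContDiff ℝ (⊤ : ℕ∞) (Function.uncurry φ)) :
    ∀ (i j : ℕ) (t x : ℝ),
      iteratedDeriv i (fun s : ℝ => iteratedDeriv j (φ s) x) t
        = pd1^[i] (pd2^[j] (Function.uncurry φ)) (t, x) := by
  intro i j
  induction i with
  | zero => intro t x; simpa using iter_repr_snd hφ j t x
  | succ n ih =>
    intro t x
    rw [iteratedDeriv_succ]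
    have hfun : iteratedDeriv n (fun s : ℝ => iteratedDeriv j (φ s) x)
        = fun t => pd1^[n] (pd2^[j] (Function.uncurry φ)) (t, x) := funext fun t => ih t x
    rw [hfun, Function.iterate_succ_apply']
    exact (hasDerivAt_pd1 (pd1_iter_contDiff (pd2_iter_contDiff hφ j) n) t x).deriv

noncomputable def Integrand (W : ℝ → ℝ) (F : ℝ × ℝ → ℝ) (s x : ℝ) : ℝ :=
  (s ^ 2 + x ^ 2) * (1 / 2) *
      ((pd1 F (s, x)) ^ 2 + (pd2 F (s, x)) ^ 2 + W x * (F (s, x)) ^ 2)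
    + 2 * s * x * (pd1 F (s, x)) * (pd2 F (s, x))
noncomputable def DIntv (W : ℝ → ℝ) (F : ℝ × ℝ → ℝ) (s x : ℝ) : ℝ :=
  2 * s * (1 / 2) * ((pd1 F (s, x)) ^ 2 + (pd2 F (s, x)) ^ 2 + W x * (F (s, x)) ^ 2)
    + (s ^ 2 + x ^ 2) * (1 / 2) *
        (2 * pd1 F (s, x) * pd1 (pd1 F) (s, x) + 2 * pd2 F (s, x) * pd1 (pd2 F) (s, x)
          + W x * (2 * F (s, x) * pd1 F (s, x)))
    + (2 * x * (pd1 F (s, x)) * (pd2 F (s, x))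
        + 2 * s * x * (pd1 (pd1 F) (s, x) * pd2 F (s, x) + pd1 F (s, x) * pd1 (pd2 F) (s, x)))
noncomputable def Gv (W : ℝ → ℝ) (F : ℝ × ℝ → ℝ) (t y : ℝ) : ℝ :=
  (t ^ 2 + y ^ 2) * pd1 F (t, y) * pd2 F (t, y)
    + t * y * ((pd1 F (t, y)) ^ 2 + (pd2 F (t, y)) ^ 2)
    - t * y * W y * (F (t, y)) ^ 2
noncomputable def DGv (W : ℝ → ℝ) (F : ℝ × ℝ → ℝ) (t x : ℝ) : ℝ :=
  2 * x * pd1 F (t, x) * pd2 F (t, x)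
    + (t ^ 2 + x ^ 2) * (pd2 (pd1 F) (t, x) * pd2 F (t, x) + pd1 F (t, x) * pd2 (pd2 F) (t, x))
    + t * ((pd1 F (t, x)) ^ 2 + (pd2 F (t, x)) ^ 2)
    + t * x * (2 * pd1 F (t, x) * pd2 (pd1 F) (t, x) + 2 * pd2 F (t, x) * pd2 (pd2 F) (t, x))
    - (t * W x * (F (t, x)) ^ 2 + t * x * deriv W x * (F (t, x)) ^ 2
        + t * x * W x * (2 * F (t, x) * pd2 F (t, x)))

lemma hasDerivAt_Integrand {F : ℝ × ℝ → ℝ} (hf : ContDiff ℝ (⊤ : ℕ∞) F) (W : ℝ → ℝ) (s x : ℝ) :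
    HasDerivAt (fun s' : ℝ => Integrand W F s' x) (DIntv W F s x) s := by
  have h1 := hasDerivAt_pd1 hf s x
  have h2 := hd_pd1_pd1 hf s x
  have h3 := hd_pd2_pd1 hf s x
  have hcoef : HasDerivAt (fun s' : ℝ => (s' ^ 2 + x ^ 2) * (1 / 2))
      ((2 * s ^ 1) * (1 / 2)) s := ((hasDerivAt_pow 2 s).add_const (x ^ 2)).mul_const (1 / 2)
  have hE := ((h2.pow 2).add (h3.pow 2)).add ((h1.pow 2).const_mul (W x))
  have h2sx : HasDerivAt (fun s' : ℝ => 2 * s' * x) (2 * 1 * x) s :=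
    ((hasDerivAt_id s).const_mul 2).mul_const x
  have main := (hcoef.mul hE).add ((h2sx.mul h2).mul h3)
  refine main.congr_deriv ?_
  unfold DIntv
  push_cast
  simp only [Pi.add_apply, Pi.mul_apply, Pi.pow_apply, Pi.sub_apply]
  ring
lemma hasDerivAt_Gv {F : ℝ × ℝ → ℝ} (hf : ContDiff ℝ (⊤ : ℕ∞) F) {W : ℝ → ℝ} (hW : ContDiff ℝ (⊤ : ℕ∞) W)
    (t x : ℝ) : HasDerivAt (fun y : ℝ => Gv W F t y) (DGv W F t x) x := by
  have h1 := hasDerivAt_pd2 hf t x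
  have h2 := hd_pd1_pd2 hf t x
  have h3 := hd_pd2_pd2 hf t x
  have hWd : HasDerivAt W (deriv W x) x := (hW.differentiable (by simp) x).hasDerivAt
  have hcoef : HasDerivAt (fun y : ℝ => t ^ 2 + y ^ 2) (2 * x ^ 1) x :=
    (hasDerivAt_pow 2 x).const_add (t ^ 2)
  have hty : HasDerivAt (fun y : ℝ => t * y) (t * 1) x := (hasDerivAt_id x).const_mul t
  have main := (((hcoef.mul h2).mul h3).add
      (hty.mul ((h2.pow 2).add (h3.pow 2)))).sub
    (((hty.mul hWd).mul (h1.pow 2)))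
  refine main.congr_deriv ?_
  unfold DGv
  push_cast
  simp only [Pi.add_apply, Pi.mul_apply, Pi.pow_apply, Pi.sub_apply]
  ring

lemma aux_pow (x : ℝ) (k : ℕ) : (1 + |x|) ^ k ≤ 2 ^ k * (1 + |x| ^ k) := by
  rcases le_total (|x|) 1 with h | h
  · calc (1 + |x|) ^ k ≤ 2 ^ k := by
          apply pow_le_pow_left₀ (by positivity) (by linarith)
      _ ≤ 2 ^ k * (1 + |x| ^ k) := by
          have : (0:ℝ) ≤ |x| ^ k := by positivity
          nlinarith [pow_pos (show (0:ℝ) < 2 by norm_num) k]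
  · calc (1 + |x|) ^ k ≤ (2 * |x|) ^ k := by
          apply pow_le_pow_left₀ (by positivity) (by linarith)
      _ = 2 ^ k * |x| ^ k := mul_pow 2 |x| k
      _ ≤ 2 ^ k * (1 + |x| ^ k) := by
          have : (0:ℝ) < 2 ^ k := pow_pos (by norm_num) k
          nlinarith

lemma term_bd {A Bf Bg a fv gv x : ℝ} {d r e : ℕ}
    (hA : 0 ≤ A) (ha : |a| ≤ A * (1 + |x|) ^ d)
    (hf : (1 + |x|) ^ e * |fv| ≤ Bf) (he : d + r ≤ e)
    (hg : (1 + |x|) ^ 0 * |gv| ≤ Bg) :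
    (1 + |x|) ^ r * |a * fv * gv| ≤ A * Bf * Bg := by
  have hx : (0:ℝ) ≤ 1 + |x| := by positivity
  have hg' : |gv| ≤ Bg := by simpa using hg
  have hBg : 0 ≤ Bg := (abs_nonneg _).trans hg'
  have hBf : 0 ≤ Bf := le_trans (by positivity) hf
  have hf' : (1 + |x|) ^ (d + r) * |fv| ≤ Bf := by
    refine le_trans ?_ hf
    apply mul_le_mul_of_nonneg_right _ (abs_nonneg _)
    exact pow_le_pow_right₀ (by linarith [abs_nonneg x]) he
  calc (1 + |x|) ^ r * |a * fv * gv|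
      = |a| * ((1 + |x|) ^ r * |fv|) * |gv| := by rw [abs_mul, abs_mul]; ring
    _ ≤ (A * (1 + |x|) ^ d) * ((1 + |x|) ^ r * |fv|) * |gv| := by gcongr
    _ = A * ((1 + |x|) ^ (d + r) * |fv|) * |gv| := by rw [pow_add]; ring
    _ ≤ A * Bf * |gv| := by gcongr
    _ ≤ A * Bf * Bg := by gcongr

lemma coeff_prod {x u v A1 A2 : ℝ} {d1 d2 : ℕ}
    (h1 : |u| ≤ A1 * (1 + |x|) ^ d1) (h2 : |v| ≤ A2 * (1 + |x|) ^ d2) :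
    |u * v| ≤ (A1 * A2) * (1 + |x|) ^ (d1 + d2) := by
  have hA1 : 0 ≤ A1 * (1 + |x|) ^ d1 := le_trans (abs_nonneg _) h1
  calc |u * v| = |u| * |v| := abs_mul u v
    _ ≤ (A1 * (1 + |x|) ^ d1) * (A2 * (1 + |x|) ^ d2) :=
        mul_le_mul h1 h2 (abs_nonneg v) hA1
    _ = (A1 * A2) * (1 + |x|) ^ (d1 + d2) := by rw [pow_add]; ring
lemma coeff_neg {x u A : ℝ} {d : ℕ} (h : |u| ≤ A * (1 + |x|) ^ d) :
    |-u| ≤ A * (1 + |x|) ^ d := by rwa [abs_neg]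

lemma abs_add3 (a b c : ℝ) : |a + b + c| ≤ |a| + |b| + |c| :=
  (abs_add_le _ _).trans (add_le_add_left (abs_add_le a b) _)
lemma abs_add4 (a b c d : ℝ) : |a + b + c + d| ≤ |a| + |b| + |c| + |d| :=
  (abs_add_le _ _).trans (add_le_add_left (abs_add3 a b c) _)
lemma abs_add5 (a b c d e : ℝ) : |a + b + c + d + e| ≤ |a| + |b| + |c| + |d| + |e| :=
  (abs_add_le _ _).trans (add_le_add_left (abs_add4 a b c d) _)
lemma abs_add6 (a b c d e f : ℝ) : |a + b + c + d + e + f| ≤ |a| + |b| + |c| + |d| + |e| + |f| :=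
  (abs_add_le _ _).trans (add_le_add_left (abs_add5 a b c d e) _)
lemma abs_add7 (a b c d e f g : ℝ) :
    |a + b + c + d + e + f + g| ≤ |a| + |b| + |c| + |d| + |e| + |f| + |g| :=
  (abs_add_le _ _).trans (add_le_add_left (abs_add6 a b c d e f) _)
lemma abs_add8 (a b c d e f g h : ℝ) :
    |a + b + c + d + e + f + g + h| ≤ |a| + |b| + |c| + |d| + |e| + |f| + |g| + |h| :=
  (abs_add_le _ _).trans (add_le_add_left (abs_add7 a b c d e f g) _)
lemma abs_add9 (a b c d e f g h i : ℝ) :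
    |a + b + c + d + e + f + g + h + i| ≤ |a| + |b| + |c| + |d| + |e| + |f| + |g| + |h| + |i| :=
  (abs_add_le _ _).trans (add_le_add_left (abs_add8 a b c d e f g h) _)
lemma abs_add10 (a b c d e f g h i j : ℝ) :
    |a + b + c + d + e + f + g + h + i + j|
      ≤ |a| + |b| + |c| + |d| + |e| + |f| + |g| + |h| + |i| + |j| :=
  (abs_add_le _ _).trans (add_le_add_left (abs_add9 a b c d e f g h i) _)

lemma abs_le_decay {v x C : ℝ} (h : (1 + |x|) ^ 2 * |v| ≤ C) : |v| ≤ |C| * (1 + x ^ 2)⁻¹ := by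
  have hp : (0:ℝ) < 1 + x ^ 2 := by positivity
  have hq : (0:ℝ) < (1 + |x|) ^ 2 := by positivity
  have h2 : 1 + x ^ 2 ≤ (1 + |x|) ^ 2 := by nlinarith [abs_nonneg x, sq_abs x]
  have h3 : |v| ≤ C / (1 + |x|) ^ 2 := by
    rw [le_div_iff₀ hq]; linarith [h]
  calc |v| ≤ C / (1 + |x|) ^ 2 := h3
    _ ≤ |C| / (1 + x ^ 2) := div_le_div₀ (abs_nonneg C) (le_abs_self C) hp h2
    _ = |C| * (1 + x ^ 2)⁻¹ := div_eq_mul_inv _ _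

lemma integrable_of_decay {g : ℝ → ℝ} (hc : Continuous g) {C : ℝ}
    (h : ∀ x, (1 + |x|) ^ 2 * |g x| ≤ C) : Integrable g := by
  have h1 : Integrable (fun x : ℝ => |C| * (1 + x ^ 2)⁻¹) := integrable_inv_one_add_sq.const_mul _
  refine h1.mono' hc.aestronglyMeasurable (ae_of_all _ fun x => ?_)
  rw [Real.norm_eq_abs]
  exact abs_le_decay (h x)

lemma weight1_decay {v y C : ℝ} (h : (1 + |y|) ^ 1 * |v| ≤ C) : ‖v‖ ≤ |C| * (1 + |y|)⁻¹ := by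
  have hq : (0:ℝ) < 1 + |y| := by positivity
  rw [Real.norm_eq_abs]
  rw [pow_one] at h
  calc |v| ≤ C / (1 + |y|) := by rw [le_div_iff₀ hq]; linarith
    _ ≤ |C| / (1 + |y|) := by gcongr; exact le_abs_self C
    _ = |C| * (1 + |y|)⁻¹ := div_eq_mul_inv _ _

set_option maxHeartbeats 4000000 in
theorem master (W : ℝ → ℝ) (hW : ContDiff ℝ (⊤ : ℕ∞) W)
    (cW : ℝ) (nW : ℕ) (cW' : ℝ) (nW' : ℕ)
    (hWg : ∀ x : ℝ, |W x| ≤ cW * (1 + |x|) ^ nW)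
    (hWg' : ∀ x : ℝ, |deriv W x| ≤ cW' * (1 + |x|) ^ nW')
    (F : ℝ × ℝ → ℝ) (hf : ContDiff ℝ (⊤ : ℕ∞) F)
    (hdec : ∀ i j k : ℕ, ∀ t₀ t₁ : ℝ, ∃ B : ℝ, 0 ≤ B ∧ ∀ s ∈ Set.Icc t₀ t₁, ∀ x : ℝ,
      (1 + |x|) ^ k * |pd1^[i] (pd2^[j] F) (s, x)| ≤ B)
    (hwave : ∀ s x : ℝ, pd1 (pd1 F) (s, x) = pd2 (pd2 F) (s, x) - W x * F (s, x))
    (t : ℝ) :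
    HasDerivAt (fun s : ℝ => ∫ x : ℝ, Integrand W F s x)
      (∫ x : ℝ, t * (2 * W x + x * deriv W x) * (F (t, x)) ^ 2) t := by
  have hcW : 0 ≤ cW := by
    have h := hWg 0
    simp at h
    exact (abs_nonneg _).trans h
  have hcW' : 0 ≤ cW' := by
    have h := hWg' 0
    simp at h
    exact (abs_nonneg _).trans h
  set S : ℝ := |t| + 1 with hSdef
  have hS0 : (0:ℝ) ≤ S := by positivity
  set m : ℕ := max nW nW' with hm
  have hnWm : nW ≤ m := le_max_left _ _
  have hnW'm : nW' ≤ m := le_max_right _ _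
  have htI : t ∈ Set.Icc (t - 1) (t + 1) := by constructor <;> linarith
  -- decay constants
  obtain ⟨Ba0, hBa0n, ha0⟩ : ∃ B : ℝ, 0 ≤ B ∧ ∀ s ∈ Set.Icc (t-1) (t+1), ∀ x : ℝ,
      (1 + |x|) ^ (0:ℕ) * |F (s, x)| ≤ B := hdec 0 0 0 (t-1) (t+1)
  obtain ⟨BaK, hBaKn, haK⟩ : ∃ B : ℝ, 0 ≤ B ∧ ∀ s ∈ Set.Icc (t-1) (t+1), ∀ x : ℝ,
      (1 + |x|) ^ (m+4) * |F (s, x)| ≤ B := hdec 0 0 (m+4) (t-1) (t+1)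
  obtain ⟨Bb0, hBb0n, hb0⟩ : ∃ B : ℝ, 0 ≤ B ∧ ∀ s ∈ Set.Icc (t-1) (t+1), ∀ x : ℝ,
      (1 + |x|) ^ (0:ℕ) * |pd1 F (s, x)| ≤ B := hdec 1 0 0 (t-1) (t+1)
  obtain ⟨BbK, hBbKn, hbK⟩ : ∃ B : ℝ, 0 ≤ B ∧ ∀ s ∈ Set.Icc (t-1) (t+1), ∀ x : ℝ,
      (1 + |x|) ^ (m+4) * |pd1 F (s, x)| ≤ B := hdec 1 0 (m+4) (t-1) (t+1)
  obtain ⟨Bc0, hBc0n, hc0⟩ : ∃ B : ℝ, 0 ≤ B ∧ ∀ s ∈ Set.Icc (t-1) (t+1), ∀ x : ℝ,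
      (1 + |x|) ^ (0:ℕ) * |pd2 F (s, x)| ≤ B := hdec 0 1 0 (t-1) (t+1)
  obtain ⟨BcK, hBcKn, hcK⟩ : ∃ B : ℝ, 0 ≤ B ∧ ∀ s ∈ Set.Icc (t-1) (t+1), ∀ x : ℝ,
      (1 + |x|) ^ (m+4) * |pd2 F (s, x)| ≤ B := hdec 0 1 (m+4) (t-1) (t+1)
  obtain ⟨Bd0, hBd0n, hd0⟩ : ∃ B : ℝ, 0 ≤ B ∧ ∀ s ∈ Set.Icc (t-1) (t+1), ∀ x : ℝ,
      (1 + |x|) ^ (0:ℕ) * |pd1 (pd1 F) (s, x)| ≤ B := hdec 2 0 0 (t-1) (t+1)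
  obtain ⟨BdK, hBdKn, hdK⟩ : ∃ B : ℝ, 0 ≤ B ∧ ∀ s ∈ Set.Icc (t-1) (t+1), ∀ x : ℝ,
      (1 + |x|) ^ (m+4) * |pd1 (pd1 F) (s, x)| ≤ B := hdec 2 0 (m+4) (t-1) (t+1)
  obtain ⟨Be0, hBe0n, he0⟩ : ∃ B : ℝ, 0 ≤ B ∧ ∀ s ∈ Set.Icc (t-1) (t+1), ∀ x : ℝ,
      (1 + |x|) ^ (0:ℕ) * |pd1 (pd2 F) (s, x)| ≤ B := hdec 1 1 0 (t-1) (t+1)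
  obtain ⟨BeK, hBeKn, heK⟩ : ∃ B : ℝ, 0 ≤ B ∧ ∀ s ∈ Set.Icc (t-1) (t+1), ∀ x : ℝ,
      (1 + |x|) ^ (m+4) * |pd1 (pd2 F) (s, x)| ≤ B := hdec 1 1 (m+4) (t-1) (t+1)
  obtain ⟨Bg0, hBg0n, hg0⟩ : ∃ B : ℝ, 0 ≤ B ∧ ∀ s ∈ Set.Icc (t-1) (t+1), ∀ x : ℝ,
      (1 + |x|) ^ (0:ℕ) * |pd2 (pd2 F) (s, x)| ≤ B := hdec 0 2 0 (t-1) (t+1)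
  obtain ⟨BgK, hBgKn, hgK⟩ : ∃ B : ℝ, 0 ≤ B ∧ ∀ s ∈ Set.Icc (t-1) (t+1), ∀ x : ℝ,
      (1 + |x|) ^ (m+4) * |pd2 (pd2 F) (s, x)| ≤ B := hdec 0 2 (m+4) (t-1) (t+1)
  -- membership in Icc gives |s| ≤ S
  have hsS : ∀ s ∈ Set.Icc (t-1) (t+1), |s| ≤ S := by
    intro s hs
    obtain ⟨h1, h2⟩ := hs
    rw [abs_le]
    constructor
    · have := neg_abs_le t; simp only [hSdef]; linarith
    · have := le_abs_self t; simp only [hSdef]; linarith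
  -- continuity facts
  have hca : Continuous F := hf.continuous
  have hcb : Continuous (pd1 F) := (pd1_contDiff hf).continuous
  have hcc : Continuous (pd2 F) := (pd2_contDiff hf).continuous
  have hcd : Continuous (pd1 (pd1 F)) := (pd1_contDiff (pd1_contDiff hf)).continuous
  have hce : Continuous (pd1 (pd2 F)) := (pd1_contDiff (pd2_contDiff hf)).continuous
  have hce2 : Continuous (pd2 (pd1 F)) := (pd2_contDiff (pd1_contDiff hf)).continuous
  have hcg : Continuous (pd2 (pd2 F)) := (pd2_contDiff (pd2_contDiff hf)).continuous
  have hcw : Continuous W := hW.continuous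
  have hcw' : Continuous (deriv W) := hW.continuous_deriv (by simp)
  -- continuity of integrand in x
  have hcIx : ∀ s : ℝ, Continuous fun x => Integrand W F s x := by
    intro s; unfold Integrand; fun_prop
  have hcDx : Continuous fun x => DIntv W F t x := by
    unfold DIntv; fun_prop
  -- bound for DIntv
  have hDIb : ∀ s ∈ Set.Icc (t-1) (t+1), ∀ x : ℝ, (1+|x|)^2 * |DIntv W F s x| ≤
      S*BbK*Bb0 + S*BcK*Bc0 + S*cW*BaK*Ba0 + (S^2+1)*BbK*Bd0 + (S^2+1)*BcK*Be0
        + (S^2+1)*cW*BaK*Bb0 + 2*1*BbK*Bc0 + 2*S*1*BdK*Bc0 + 2*S*1*BbK*Be0 := by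
    intro s hs x
    have hss : |s| ≤ S := hsS s hs
    have hbs : |s| ≤ S * (1+|x|)^(0:ℕ) := by simpa using hss
    have hbx : |x| ≤ 1 * (1+|x|)^(1:ℕ) := by
      rw [one_mul, pow_one]; linarith [abs_nonneg x]
    have hb2 : |(2:ℝ)| ≤ 2 * (1+|x|)^(0:ℕ) := by rw [pow_zero, mul_one]; norm_num
    have hbsq : |s^2 + x^2| ≤ (S^2+1) * (1+|x|)^(2:ℕ) := by
      rw [abs_of_nonneg (by positivity)]
      have h1 : s^2 ≤ S^2 := by nlinarith [sq_abs s, abs_nonneg s]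
      nlinarith [abs_nonneg x, sq_abs x, hS0, mul_nonneg (sq_nonneg S) (abs_nonneg x),
        mul_nonneg (sq_nonneg S) (sq_nonneg x)]
    have hT1 : (1+|x|)^2 * |s * pd1 F (s,x) * pd1 F (s,x)| ≤ S * BbK * Bb0 :=
      term_bd hS0 hbs (hbK s hs x) (by omega) (hb0 s hs x)
    have hT2 : (1+|x|)^2 * |s * pd2 F (s,x) * pd2 F (s,x)| ≤ S * BcK * Bc0 :=
      term_bd hS0 hbs (hcK s hs x) (by omega) (hc0 s hs x)
    have hT3 : (1+|x|)^2 * |s * W x * F (s,x) * F (s,x)| ≤ S * cW * BaK * Ba0 :=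
      term_bd (mul_nonneg hS0 hcW) (coeff_prod hbs (hWg x)) (haK s hs x) (by omega) (ha0 s hs x)
    have hT4 : (1+|x|)^2 * |(s^2+x^2) * pd1 F (s,x) * pd1 (pd1 F) (s,x)| ≤ (S^2+1) * BbK * Bd0 :=
      term_bd (by positivity) hbsq (hbK s hs x) (by omega) (hd0 s hs x)
    have hT5 : (1+|x|)^2 * |(s^2+x^2) * pd2 F (s,x) * pd1 (pd2 F) (s,x)| ≤ (S^2+1) * BcK * Be0 :=
      term_bd (by positivity) hbsq (hcK s hs x) (by omega) (he0 s hs x)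
    have hT6 : (1+|x|)^2 * |(s^2+x^2) * W x * F (s,x) * pd1 F (s,x)| ≤ (S^2+1) * cW * BaK * Bb0 :=
      term_bd (mul_nonneg (by positivity) hcW) (coeff_prod hbsq (hWg x)) (haK s hs x)
        (by omega) (hb0 s hs x)
    have hT7 : (1+|x|)^2 * |2 * x * pd1 F (s,x) * pd2 F (s,x)| ≤ 2 * 1 * BbK * Bc0 :=
      term_bd (by norm_num) (coeff_prod hb2 hbx) (hbK s hs x) (by omega) (hc0 s hs x)
    have hT8 : (1+|x|)^2 * |2 * s * x * pd1 (pd1 F) (s,x) * pd2 F (s,x)| ≤ 2 * S * 1 * BdK * Bc0 :=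
      term_bd (by positivity) (coeff_prod (coeff_prod hb2 hbs) hbx) (hdK s hs x)
        (by omega) (hc0 s hs x)
    have hT9 : (1+|x|)^2 * |2 * s * x * pd1 F (s,x) * pd1 (pd2 F) (s,x)| ≤ 2 * S * 1 * BbK * Be0 :=
      term_bd (by positivity) (coeff_prod (coeff_prod hb2 hbs) hbx) (hbK s hs x)
        (by omega) (he0 s hs x)
    have hexp : DIntv W F s x
        = s * pd1 F (s,x) * pd1 F (s,x) + s * pd2 F (s,x) * pd2 F (s,x)
          + s * W x * F (s,x) * F (s,x)
          + (s^2+x^2) * pd1 F (s,x) * pd1 (pd1 F) (s,x)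
          + (s^2+x^2) * pd2 F (s,x) * pd1 (pd2 F) (s,x)
          + (s^2+x^2) * W x * F (s,x) * pd1 F (s,x)
          + 2 * x * pd1 F (s,x) * pd2 F (s,x)
          + 2 * s * x * pd1 (pd1 F) (s,x) * pd2 F (s,x)
          + 2 * s * x * pd1 F (s,x) * pd1 (pd2 F) (s,x) := by
      unfold DIntv; ring
    rw [hexp]
    refine le_trans (mul_le_mul_of_nonneg_left (abs_add9 _ _ _ _ _ _ _ _ _) (by positivity)) ?_
    ring_nf
    ring_nf at hT1 hT2 hT3 hT4 hT5 hT6 hT7 hT8 hT9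
    linarith
  -- bound for Integrand at parameters in Icc
  have hIb : ∀ s ∈ Set.Icc (t-1) (t+1), ∀ x : ℝ, (1+|x|)^2 * |Integrand W F s x| ≤
      (S^2+1)*(1/2)*BbK*Bb0 + (S^2+1)*(1/2)*BcK*Bc0 + (S^2+1)*(1/2)*cW*BaK*Ba0
        + 2*S*1*BbK*Bc0 := by
    intro s hs x
    have hss : |s| ≤ S := hsS s hs
    have hbs : |s| ≤ S * (1+|x|)^(0:ℕ) := by simpa using hss
    have hbx : |x| ≤ 1 * (1+|x|)^(1:ℕ) := by
      rw [one_mul, pow_one]; linarith [abs_nonneg x]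
    have hb2 : |(2:ℝ)| ≤ 2 * (1+|x|)^(0:ℕ) := by rw [pow_zero, mul_one]; norm_num
    have hbhalf : |(1/2:ℝ)| ≤ (1/2) * (1+|x|)^(0:ℕ) := by
      rw [pow_zero, mul_one, abs_of_nonneg (by norm_num : (0:ℝ) ≤ 1/2)]
    have hbsq : |s^2 + x^2| ≤ (S^2+1) * (1+|x|)^(2:ℕ) := by
      rw [abs_of_nonneg (by positivity)]
      have h1 : s^2 ≤ S^2 := by nlinarith [sq_abs s, abs_nonneg s]
      nlinarith [abs_nonneg x, sq_abs x, hS0, mul_nonneg (sq_nonneg S) (abs_nonneg x),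
        mul_nonneg (sq_nonneg S) (sq_nonneg x)]
    have hI1 : (1+|x|)^2 * |(s^2+x^2) * (1/2) * pd1 F (s,x) * pd1 F (s,x)|
        ≤ (S^2+1) * (1/2) * BbK * Bb0 :=
      term_bd (by positivity) (coeff_prod hbsq hbhalf) (hbK s hs x) (by omega) (hb0 s hs x)
    have hI2 : (1+|x|)^2 * |(s^2+x^2) * (1/2) * pd2 F (s,x) * pd2 F (s,x)|
        ≤ (S^2+1) * (1/2) * BcK * Bc0 :=
      term_bd (by positivity) (coeff_prod hbsq hbhalf) (hcK s hs x) (by omega) (hc0 s hs x)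
    have hI3 : (1+|x|)^2 * |(s^2+x^2) * (1/2) * W x * F (s,x) * F (s,x)|
        ≤ (S^2+1) * (1/2) * cW * BaK * Ba0 :=
      term_bd (mul_nonneg (by positivity) hcW) (coeff_prod (coeff_prod hbsq hbhalf) (hWg x))
        (haK s hs x) (by omega) (ha0 s hs x)
    have hI4 : (1+|x|)^2 * |2 * s * x * pd1 F (s,x) * pd2 F (s,x)| ≤ 2 * S * 1 * BbK * Bc0 :=
      term_bd (by positivity) (coeff_prod (coeff_prod hb2 hbs) hbx) (hbK s hs x)
        (by omega) (hc0 s hs x)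
    have hexp : Integrand W F s x
        = (s^2+x^2) * (1/2) * pd1 F (s,x) * pd1 F (s,x)
          + (s^2+x^2) * (1/2) * pd2 F (s,x) * pd2 F (s,x)
          + (s^2+x^2) * (1/2) * W x * F (s,x) * F (s,x)
          + 2 * s * x * pd1 F (s,x) * pd2 F (s,x) := by
      unfold Integrand; ring
    rw [hexp]
    refine le_trans (mul_le_mul_of_nonneg_left (abs_add4 _ _ _ _) (by positivity)) ?_
    ring_nf
    ring_nf at hI1 hI2 hI3 hI4
    linarith
  -- bound for the target integrand
  have hbt : ∀ x : ℝ, |t| ≤ S * (1+|x|)^(0:ℕ) := fun x => by simpa using hsS t htI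
  have hTb : ∀ x : ℝ, (1+|x|)^2 * |t * (2 * W x + x * deriv W x) * (F (t,x))^2| ≤
      2*S*cW*BaK*Ba0 + S*1*cW'*BaK*Ba0 := by
    intro x
    have hbx : |x| ≤ 1 * (1+|x|)^(1:ℕ) := by
      rw [one_mul, pow_one]; linarith [abs_nonneg x]
    have hb2 : |(2:ℝ)| ≤ 2 * (1+|x|)^(0:ℕ) := by rw [pow_zero, mul_one]; norm_num
    have hU1 : (1+|x|)^2 * |2 * t * W x * F (t,x) * F (t,x)| ≤ 2 * S * cW * BaK * Ba0 :=
      term_bd (mul_nonneg (by positivity) hcW) (coeff_prod (coeff_prod hb2 (hbt x)) (hWg x))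
        (haK t htI x) (by omega) (ha0 t htI x)
    have hU2 : (1+|x|)^2 * |t * x * deriv W x * F (t,x) * F (t,x)| ≤ S * 1 * cW' * BaK * Ba0 :=
      term_bd (mul_nonneg (by positivity) hcW') (coeff_prod (coeff_prod (hbt x) hbx) (hWg' x))
        (haK t htI x) (by omega) (ha0 t htI x)
    have hexp : t * (2 * W x + x * deriv W x) * (F (t,x))^2
        = 2 * t * W x * F (t,x) * F (t,x) + t * x * deriv W x * F (t,x) * F (t,x) := by ring
    rw [hexp]
    refine le_trans (mul_le_mul_of_nonneg_left (abs_add_le _ _) (by positivity)) ?_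
    ring_nf
    ring_nf at hU1 hU2
    linarith
  -- bound for Gv with weight 1
  have hGb : ∀ y : ℝ, (1+|y|)^1 * |Gv W F t y| ≤
      (S^2+1)*BbK*Bc0 + S*1*BbK*Bb0 + S*1*BcK*Bc0 + S*1*cW*BaK*Ba0 := by
    intro y
    have hby : |y| ≤ 1 * (1+|y|)^(1:ℕ) := by
      rw [one_mul, pow_one]; linarith [abs_nonneg y]
    have hbsq : |t^2 + y^2| ≤ (S^2+1) * (1+|y|)^(2:ℕ) := by
      rw [abs_of_nonneg (by positivity)]
      have h1 : t^2 ≤ S^2 := by nlinarith [sq_abs t, abs_nonneg t, hsS t htI]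
      nlinarith [abs_nonneg y, sq_abs y, hS0, mul_nonneg (sq_nonneg S) (abs_nonneg y),
        mul_nonneg (sq_nonneg S) (sq_nonneg y)]
    have hG1 : (1+|y|)^1 * |(t^2+y^2) * pd1 F (t,y) * pd2 F (t,y)| ≤ (S^2+1) * BbK * Bc0 :=
      term_bd (by positivity) hbsq (hbK t htI y) (by omega) (hc0 t htI y)
    have hG2 : (1+|y|)^1 * |t * y * pd1 F (t,y) * pd1 F (t,y)| ≤ S * 1 * BbK * Bb0 :=
      term_bd (by positivity) (coeff_prod (hbt y) hby) (hbK t htI y) (by omega) (hb0 t htI y)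
    have hG3 : (1+|y|)^1 * |t * y * pd2 F (t,y) * pd2 F (t,y)| ≤ S * 1 * BcK * Bc0 :=
      term_bd (by positivity) (coeff_prod (hbt y) hby) (hcK t htI y) (by omega) (hc0 t htI y)
    have hG4 : (1+|y|)^1 * |-(t * y * W y) * F (t,y) * F (t,y)| ≤ S * 1 * cW * BaK * Ba0 :=
      term_bd (mul_nonneg (by positivity) hcW)
        (coeff_neg (coeff_prod (coeff_prod (hbt y) hby) (hWg y)))
        (haK t htI y) (by omega) (ha0 t htI y)
    have hexp : Gv W F t y
        = (t^2+y^2) * pd1 F (t,y) * pd2 F (t,y)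
          + t * y * pd1 F (t,y) * pd1 F (t,y)
          + t * y * pd2 F (t,y) * pd2 F (t,y)
          + -(t * y * W y) * F (t,y) * F (t,y) := by
      unfold Gv; ring
    rw [hexp]
    refine le_trans (mul_le_mul_of_nonneg_left (abs_add4 _ _ _ _) (by positivity)) ?_
    ring_nf
    ring_nf at hG1 hG2 hG3 hG4
    linarith
  -- apply differentiation under the integral sign
  have hmeas : ∀ᶠ s in nhds t, AEStronglyMeasurable (fun x => Integrand W F s x)
      (volume : Measure ℝ) := Eventually.of_forall fun s => (hcIx s).aestronglyMeasurable
  have hint : Integrable (fun x => Integrand W F t x) := integrable_of_decay (hcIx t) (hIb t htI)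
  have hmeas' : AEStronglyMeasurable (fun x => DIntv W F t x) (volume : Measure ℝ) :=
    hcDx.aestronglyMeasurable
  have hbound : ∀ᵐ x : ℝ, ∀ s ∈ Metric.ball t 1, ‖DIntv W F s x‖ ≤
      |S*BbK*Bb0 + S*BcK*Bc0 + S*cW*BaK*Ba0 + (S^2+1)*BbK*Bd0 + (S^2+1)*BcK*Be0
        + (S^2+1)*cW*BaK*Bb0 + 2*1*BbK*Bc0 + 2*S*1*BdK*Bc0 + 2*S*1*BbK*Be0| * (1 + x^2)⁻¹ := by
    refine ae_of_all _ fun x s hs => ?_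
    have hsIcc : s ∈ Set.Icc (t-1) (t+1) := by
      rw [Metric.mem_ball, Real.dist_eq] at hs
      have h' := abs_lt.mp hs
      constructor <;> [linarith [h'.1]; linarith [h'.2]]
    rw [Real.norm_eq_abs]
    exact abs_le_decay (hDIb s hsIcc x)
  have hbint : Integrable (fun x : ℝ =>
      |S*BbK*Bb0 + S*BcK*Bc0 + S*cW*BaK*Ba0 + (S^2+1)*BbK*Bd0 + (S^2+1)*BcK*Be0
        + (S^2+1)*cW*BaK*Bb0 + 2*1*BbK*Bc0 + 2*S*1*BdK*Bc0 + 2*S*1*BbK*Be0| * (1 + x^2)⁻¹) :=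
    integrable_inv_one_add_sq.const_mul _
  have hdiff : ∀ᵐ x : ℝ, ∀ s ∈ Metric.ball t 1,
      HasDerivAt (fun s' => Integrand W F s' x) (DIntv W F s x) s :=
    ae_of_all _ fun x s _ => hasDerivAt_Integrand hf W s x
  obtain ⟨hDIint, hHD⟩ := hasDerivAt_integral_of_dominated_loc_of_deriv_le (Metric.ball_mem_nhds t one_pos)
    hmeas hint hmeas' hbound hbint hdiff
  -- pointwise identity
  have hptw : ∀ x : ℝ, DIntv W F t x
      = t * (2 * W x + x * deriv W x) * (F (t,x))^2 + DGv W F t x := by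
    intro x
    have h2 : pd2 (pd1 F) (t,x) = pd1 (pd2 F) (t,x) := pd_comm hf (t,x)
    unfold DIntv DGv
    rw [hwave t x, h2]
    ring
  have hTcont : Continuous fun x => t * (2 * W x + x * deriv W x) * (F (t,x))^2 := by fun_prop
  have hTint : Integrable (fun x => t * (2 * W x + x * deriv W x) * (F (t,x))^2) :=
    integrable_of_decay hTcont hTb
  have hDGint : Integrable (fun x => DGv W F t x) := by
    have hfun : (fun x => DGv W F t x)
        = fun x => DIntv W F t x - t * (2 * W x + x * deriv W x) * (F (t,x))^2 :=
      funext fun x => by rw [hptw x]; ring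
    rw [hfun]; exact hDIint.sub hTint
  -- boundary term vanishes
  have hzero : ∫ x : ℝ, DGv W F t x = 0 := by
    have hib : ∀ a b : ℝ, ∫ x in a..b, DGv W F t x = Gv W F t b - Gv W F t a := fun a b =>
      intervalIntegral.integral_eq_sub_of_hasDerivAt (fun x _ => hasDerivAt_Gv hf hW t x)
        hDGint.intervalIntegrable
    have hGbd : ∀ y : ℝ, ‖Gv W F t y‖ ≤
        |(S^2+1)*BbK*Bc0 + S*1*BbK*Bb0 + S*1*BcK*Bc0 + S*1*cW*BaK*Ba0| * (1 + |y|)⁻¹ :=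
      fun y => weight1_decay (hGb y)
    have hbase : Tendsto (fun y : ℝ => 1 + |y|) atTop atTop :=
      tendsto_atTop_add_const_left _ 1 tendsto_abs_atTop_atTop
    have hbase' : Tendsto (fun y : ℝ => 1 + |y|) atBot atTop :=
      tendsto_atTop_add_const_left _ 1 tendsto_abs_atBot_atTop
    have hbnd_top : Tendsto (fun y : ℝ =>
        |(S^2+1)*BbK*Bc0 + S*1*BbK*Bb0 + S*1*BcK*Bc0 + S*1*cW*BaK*Ba0| * (1+|y|)⁻¹)
        atTop (nhds 0) := by
      have h := hbase.inv_tendsto_atTop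
      have := h.const_mul |(S^2+1)*BbK*Bc0 + S*1*BbK*Bb0 + S*1*BcK*Bc0 + S*1*cW*BaK*Ba0|
      simpa using this
    have hbnd_bot : Tendsto (fun y : ℝ =>
        |(S^2+1)*BbK*Bc0 + S*1*BbK*Bb0 + S*1*BcK*Bc0 + S*1*cW*BaK*Ba0| * (1+|y|)⁻¹)
        atBot (nhds 0) := by
      have h := hbase'.inv_tendsto_atTop
      have := h.const_mul |(S^2+1)*BbK*Bc0 + S*1*BbK*Bb0 + S*1*BcK*Bc0 + S*1*cW*BaK*Ba0|
      simpa using this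
    have htop : Tendsto (fun y => Gv W F t y) atTop (nhds 0) := squeeze_zero_norm hGbd hbnd_top
    have hbot : Tendsto (fun y => Gv W F t y) atBot (nhds 0) := squeeze_zero_norm hGbd hbnd_bot
    have hlim := MeasureTheory.intervalIntegral_tendsto_integral hDGint
      tendsto_neg_atTop_atBot tendsto_id
    have heq2 : (fun r : ℝ => ∫ x in (-r)..(id r), DGv W F t x)
        = fun r => Gv W F t r - Gv W F t (-r) := funext fun r => by simp [hib]
    rw [heq2] at hlim
    have hlim2 : Tendsto (fun r : ℝ => Gv W F t r - Gv W F t (-r)) atTop (nhds 0) := by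
      have := htop.sub (hbot.comp tendsto_neg_atTop_atBot)
      simpa using this
    exact tendsto_nhds_unique hlim hlim2
  have hval : ∫ x : ℝ, DIntv W F t x
      = ∫ x : ℝ, t * (2 * W x + x * deriv W x) * (F (t,x))^2 := by
    have hfun : (fun x => DIntv W F t x)
        = fun x => t * (2 * W x + x * deriv W x) * (F (t,x))^2 + DGv W F t x := funext hptw
    rw [hfun, integral_add hTint hDGint, hzero, add_zero]
  rw [← hval]
  exact hHD


set_option maxHeartbeats 1000000 in
/-- Let `W : ℝ → [0, ∞)` be a smooth function such that `W` and
its derivative `W'` have at most polynomial growth.  Let `φ` be a smooth solution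
of `∂_t²φ = ∂_x²φ − W·φ` which is, together with all its derivatives, Schwartz in
`x` locally uniformly in `t`.  Define the conformal charge
`E_C(t) = ∫ [ (t² + x²)·(1/2)((∂_tφ)² + (∂_xφ)² + W·φ²) + 2tx·(∂_tφ)(∂_xφ) ] dx`.
Then `E_C` is differentiable in `t` and for every `t`,
`d/dt E_C(t) = ∫ t·(2W(x) + x·W'(x))·φ(t,x)² dx`. -/
theorem conformal_charge_growth_identity
    (W : ℝ → ℝ) (hW : ContDiff ℝ (⊤ : ℕ∞) W) (hW0 : ∀ x : ℝ, 0 ≤ W x)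
    (hWgrowth : ∃ (c : ℝ) (n : ℕ), ∀ x : ℝ, |W x| ≤ c * (1 + |x|) ^ n)
    (hW'growth : ∃ (c : ℝ) (n : ℕ), ∀ x : ℝ, |deriv W x| ≤ c * (1 + |x|) ^ n)
    (φ : ℝ → ℝ → ℝ) (hφ : ContDiff ℝ (⊤ : ℕ∞) (Function.uncurry φ))
    (hdecay : ∀ (i j k : ℕ) (t₀ t₁ : ℝ), ∃ B : ℝ, ∀ t ∈ Set.Icc t₀ t₁, ∀ x : ℝ,
      |x| ^ k * |iteratedDeriv i (fun s : ℝ => iteratedDeriv j (φ s) x) t| ≤ B)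
    (heq : ∀ t x : ℝ,
      iteratedDeriv 2 (fun s : ℝ => φ s x) t = iteratedDeriv 2 (φ t) x - W x * φ t x) :
    ∀ t : ℝ, HasDerivAt
      (fun s : ℝ => ∫ x : ℝ,
        ((s ^ 2 + x ^ 2) * (1 / 2) *
            ((deriv (fun u : ℝ => φ u x) s) ^ 2 + (deriv (φ s) x) ^ 2
              + W x * (φ s x) ^ 2)
          + 2 * s * x * (deriv (fun u : ℝ => φ u x) s) * (deriv (φ s) x)))
      (∫ x : ℝ, t * (2 * W x + x * deriv W x) * (φ t x) ^ 2) t := by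
  intro t
  obtain ⟨cW, nW, hWg⟩ := hWgrowth
  obtain ⟨cW', nW', hWg'⟩ := hW'growth
  have hdec : ∀ i j k : ℕ, ∀ t₀ t₁ : ℝ, ∃ B : ℝ, 0 ≤ B ∧ ∀ s ∈ Set.Icc t₀ t₁, ∀ x : ℝ,
      (1 + |x|) ^ k * |pd1^[i] (pd2^[j] (Function.uncurry φ)) (s, x)| ≤ B := by
    intro i j k t₀ t₁
    obtain ⟨B0, h0⟩ := hdecay i j 0 t₀ t₁
    obtain ⟨Bk, hk⟩ := hdecay i j k t₀ t₁
    refine ⟨2^k * (max B0 0 + max Bk 0), by positivity, fun s hs x => ?_⟩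
    have h0' := h0 s hs x
    have hk' := hk s hs x
    rw [iter_repr hφ i j s x] at h0' hk'
    rw [pow_zero, one_mul] at h0'
    have h0'' : |pd1^[i] (pd2^[j] (Function.uncurry φ)) (s,x)| ≤ max B0 0 :=
      h0'.trans (le_max_left _ _)
    have hk'' : |x|^k * |pd1^[i] (pd2^[j] (Function.uncurry φ)) (s,x)| ≤ max Bk 0 :=
      hk'.trans (le_max_left _ _)
    calc (1+|x|)^k * |pd1^[i] (pd2^[j] (Function.uncurry φ)) (s,x)|
        ≤ (2^k * (1 + |x|^k)) * |pd1^[i] (pd2^[j] (Function.uncurry φ)) (s,x)| :=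
          mul_le_mul_of_nonneg_right (aux_pow x k) (abs_nonneg _)
      _ = 2^k * (|pd1^[i] (pd2^[j] (Function.uncurry φ)) (s,x)|
            + |x|^k * |pd1^[i] (pd2^[j] (Function.uncurry φ)) (s,x)|) := by ring
      _ ≤ 2^k * (max B0 0 + max Bk 0) := by
          have h2k : (0:ℝ) ≤ 2^k := by positivity
          exact mul_le_mul_of_nonneg_left (add_le_add h0'' hk'') h2k
  have hwave : ∀ s x : ℝ, pd1 (pd1 (Function.uncurry φ)) (s,x)
      = pd2 (pd2 (Function.uncurry φ)) (s,x) - W x * Function.uncurry φ (s,x) := by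
    intro s x
    have h := heq s x
    have e1 : iteratedDeriv 2 (fun u : ℝ => φ u x) s
        = pd1^[2] (pd2^[0] (Function.uncurry φ)) (s,x) := by
      have h2 := iter_repr hφ 2 0 s x
      simpa using h2
    have e2 : iteratedDeriv 2 (φ s) x = pd2^[2] (Function.uncurry φ) (s,x) :=
      iter_repr_snd hφ 2 s x
    rw [e1, e2] at h
    exact h
  have key := master W hW cW nW cW' nW' hWg hWg' (Function.uncurry φ) hφ hdec hwave t
  have hfun : (fun s : ℝ => ∫ x : ℝ,
        ((s ^ 2 + x ^ 2) * (1 / 2) *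
            ((deriv (fun u : ℝ => φ u x) s) ^ 2 + (deriv (φ s) x) ^ 2
              + W x * (φ s x) ^ 2)
          + 2 * s * x * (deriv (fun u : ℝ => φ u x) s) * (deriv (φ s) x)))
      = fun s : ℝ => ∫ x : ℝ, Integrand W (Function.uncurry φ) s x := by
    funext s
    congr 1
    funext x
    rw [show deriv (fun u : ℝ => φ u x) s = pd1 (Function.uncurry φ) (s,x) from
        (hasDerivAt_pd1 hφ s x).deriv,
      show deriv (φ s) x = pd2 (Function.uncurry φ) (s,x) from
        (hasDerivAt_pd2 hφ s x).deriv]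
    rfl
  rw [hfun]
  exact key
end
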